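/- arXiv:2212.11621 — 7 statements merged into one kernel-verified Lean document; each statement's English description precedes it below -/
import Mathlib

section
/- Let a : ℝ → ℝ be continuous and bounded. Then there exist constants k ≥ 1 and β > 0 such that exp(∫_s^t a(r) dr) ≤ k·e^{-β(t-s)} for all t ≥ s if and only if lim_{l→∞} sup { (1/(t-s))·∫_s^t a(r) dr : t - s ≥ l } < 0. -/
open Real Filter Set

theorem stmt0 (a : ℝ → ℝ) (hcont : Continuous a) (hbdd : ∃ C, ∀ t, |a t| ≤ C) :
    (∃ k ≥ (1:ℝ), ∃ β > (0:ℝ), ∀ s t : ℝ, s ≤ t →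
        Real.exp (∫ r in s..t, a r) ≤ k * Real.exp (-β * (t - s))) ↔
    (∃ L < (0:ℝ), Tendsto
        (fun l => sSup {y : ℝ | ∃ s t : ℝ, t - s ≥ l ∧ y = (1 / (t - s)) * ∫ r in s..t, a r})
        atTop (nhds L)) := by
  obtain ⟨C, hC⟩ := hbdd
  set C' : ℝ := max C 0 with hC'def
  have hC'0 : (0:ℝ) ≤ C' := le_max_right _ _
  have hC'a : ∀ t, |a t| ≤ C' := fun t => (hC t).trans (le_max_left _ _)
  have hint : ∀ s t : ℝ, |∫ r in s..t, a r| ≤ C' * |t - s| := fun s t => by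
    simpa using intervalIntegral.norm_integral_le_of_norm_le_const
      (a := s) (b := t) (f := a) (fun x _ => hC'a x)
  set S : ℝ → Set ℝ :=
    fun l => {y : ℝ | ∃ s t : ℝ, t - s ≥ l ∧ y = (1 / (t - s)) * ∫ r in s..t, a r} with hSdef
  have hmem : ∀ s t : ℝ, |(1 / (t - s)) * ∫ r in s..t, a r| ≤ C' := by
    intro s t
    rcases eq_or_ne t s with h | h
    · simp [h, hC'0]
    · have hts : t - s ≠ 0 := sub_ne_zero.mpr h
      have hts' : |t - s| ≠ 0 := by simpa using hts
      have h1 : |1 / (t - s) * ∫ r in s..t, a r| = |∫ r in s..t, a r| / |t - s| := by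
        rw [abs_mul, abs_div, abs_one]
        ring
      rw [h1, div_le_iff₀ (by positivity : (0:ℝ) < |t - s|)]
      exact hint s t
  have hsub : ∀ l, ∀ y ∈ S l, -C' ≤ y ∧ y ≤ C' := by
    rintro l y ⟨s, t, hts, rfl⟩
    exact abs_le.mp (hmem s t)
  have hne : ∀ l, (S l).Nonempty := by
    intro l
    exact ⟨(1 / (max l 1 - 0)) * ∫ r in (0:ℝ)..(max l 1), a r, 0, max l 1,
      by simpa using le_max_left l 1, rfl⟩
  have hbddA : ∀ l, BddAbove (S l) := fun l => ⟨C', fun y hy => (hsub l y hy).2⟩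
  set f : ℝ → ℝ := fun l => sSup (S l) with hfdef
  have hanti : Antitone f := by
    intro l l' h
    refine csSup_le_csSup (hbddA l) (hne l') ?_
    rintro y ⟨s, t, hts, rfl⟩
    exact ⟨s, t, le_trans h hts, rfl⟩
  have hflb : ∀ l, -C' ≤ f l := by
    intro l
    obtain ⟨y, hy⟩ := hne l
    exact le_trans (hsub l y hy).1 (le_csSup (hbddA l) hy)
  have hbb : BddBelow (range f) := ⟨-C', by rintro _ ⟨l, rfl⟩; exact hflb l⟩
  constructor
  · rintro ⟨k, hk, β, hβ, H⟩
    have hk0 : (0:ℝ) < k := lt_of_lt_of_le one_pos hk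
    have hlogk : (0:ℝ) ≤ Real.log k := Real.log_nonneg hk
    have hfl : ∀ l : ℝ, 0 < l → f l ≤ Real.log k / l - β := by
      intro l hl
      refine csSup_le (hne l) ?_
      rintro y ⟨s, t, hts, rfl⟩
      have hpos : 0 < t - s := lt_of_lt_of_le hl hts
      have hst : s ≤ t := by linarith
      have h1 := H s t hst
      rw [← Real.exp_log hk0, ← Real.exp_add] at h1
      have hInt : (∫ r in s..t, a r) ≤ Real.log k - β * (t - s) := by
        have := Real.exp_le_exp.mp h1
        linarith
      have key : (1 / (t - s)) * (∫ r in s..t, a r) ≤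
          (1 / (t - s)) * (Real.log k - β * (t - s)) :=
        mul_le_mul_of_nonneg_left hInt (by positivity)
      have h2 : (1 / (t - s)) * (Real.log k - β * (t - s)) = Real.log k / (t - s) - β := by
        field_simp
      have h3 : Real.log k / (t - s) ≤ Real.log k / l := by
        gcongr
      linarith [key, h2 ▸ key]
    refine ⟨⨅ l, f l, ?_, tendsto_atTop_ciInf hanti hbb⟩
    set l₀ : ℝ := max 1 (2 * Real.log k / β) with hl₀def
    have hl₀pos : (0:ℝ) < l₀ := lt_of_lt_of_le one_pos (le_max_left _ _)
    have hl₀ : 2 * Real.log k / β ≤ l₀ := le_max_right _ _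
    have h2 : Real.log k / l₀ ≤ β / 2 := by
      rw [div_le_iff₀ hl₀pos]
      rw [div_le_iff₀ hβ] at hl₀
      nlinarith
    have : (⨅ l, f l) ≤ f l₀ := ciInf_le hbb l₀
    have := hfl l₀ hl₀pos
    linarith
  · rintro ⟨L, hL, htend⟩
    have hev : ∀ᶠ l in atTop, f l < L / 2 :=
      htend.eventually (eventually_lt_nhds (by linarith : L < L / 2))
    obtain ⟨l₀, hfl₀, hl₀1⟩ := (hev.and (eventually_ge_atTop (1:ℝ))).exists
    have hl₀pos : (0:ℝ) < l₀ := lt_of_lt_of_le one_pos hl₀1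
    set β : ℝ := -(L / 2) with hβdef
    have hβ : (0:ℝ) < β := by simp [hβdef]; linarith
    refine ⟨Real.exp ((C' + β) * l₀), ?_, β, hβ, ?_⟩
    · have : (0:ℝ) ≤ (C' + β) * l₀ := by positivity
      calc (1:ℝ) = Real.exp 0 := Real.exp_zero.symm
        _ ≤ _ := Real.exp_le_exp.mpr this
    · intro s t hst
      have hts0 : (0:ℝ) ≤ t - s := by linarith
      rcases le_or_gt l₀ (t - s) with h | h
      · have hpos : (0:ℝ) < t - s := lt_of_lt_of_le hl₀pos h
        have hy : (1 / (t - s)) * (∫ r in s..t, a r) ∈ S l₀ := ⟨s, t, h, rfl⟩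
        have hyle : (1 / (t - s)) * (∫ r in s..t, a r) ≤ f l₀ := le_csSup (hbddA l₀) hy
        have hy2 : (1 / (t - s)) * (∫ r in s..t, a r) ≤ -β := by
          rw [hβdef]; linarith
        have hInt : (∫ r in s..t, a r) ≤ -β * (t - s) := by
          have := mul_le_mul_of_nonneg_left hy2 (le_of_lt hpos)
          have heq : (t - s) * ((1 / (t - s)) * (∫ r in s..t, a r)) = ∫ r in s..t, a r := by
            field_simp
          rw [heq] at this
          linarith
        calc Real.exp (∫ r in s..t, a r) ≤ Real.exp (-β * (t - s)) :=
              Real.exp_le_exp.mpr hInt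
          _ ≤ Real.exp ((C' + β) * l₀) * Real.exp (-β * (t - s)) := by
              nlinarith [Real.exp_pos (-β * (t - s)),
                Real.one_le_exp (by positivity : (0:ℝ) ≤ (C' + β) * l₀)]
      · have hInt : (∫ r in s..t, a r) ≤ C' * (t - s) := by
          have := hint s t
          rw [abs_of_nonneg hts0] at this
          exact (abs_le.mp this).2
        rw [← Real.exp_add]
        refine Real.exp_le_exp.mpr ?_
        nlinarith
end

section
/- Let h : ℝ × ℝ → ℝ be continuous with continuous partial derivative h_x, and suppose there exists ρ > 0 such that h(t,x)/x ≤ -1 whenever |x| ≥ ρ and t ∈ ℝ. If x₀ > ρ and t ↦ x(t) is the solution of x' = h(t,x) with x(s) = x₀, then there exists t₀ with s < t₀ ≤ s + (x₀ - ρ)/ρ such that x(t₀) = ρ. -/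
theorem stmt1 (h : ℝ → ℝ → ℝ) (hx' : ℝ → ℝ → ℝ)
    (hc : Continuous fun p : ℝ × ℝ => h p.1 p.2)
    (hd : ∀ t x, HasDerivAt (h t) (hx' t x) x)
    (hdc : Continuous fun p : ℝ × ℝ => hx' p.1 p.2)
    (ρ : ℝ) (hρ : 0 < ρ)
    (hcoer : ∀ t x : ℝ, ρ ≤ |x| → h t x / x ≤ -1)
    (s x₀ : ℝ) (hx₀ : ρ < x₀)
    (x : ℝ → ℝ) (hinit : x s = x₀)
    (hsol : ∀ t ∈ Set.Icc s (s + (x₀ - ρ) / ρ), HasDerivAt x (h t (x t)) t) :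
    ∃ t₀, s < t₀ ∧ t₀ ≤ s + (x₀ - ρ) / ρ ∧ x t₀ = ρ := by
  set T := s + (x₀ - ρ) / ρ with hTdef
  have hsT : s < T := by
    have : 0 < (x₀ - ρ) / ρ := div_pos (by linarith) hρ
    simp only [hTdef]; linarith
  have hcont : ContinuousOn x (Set.Icc s T) := fun t ht =>
    (hsol t ht).continuousAt.continuousWithinAt
  by_contra hcon
  push_neg at hcon
  -- x stays above ρ on [s, T]
  have hpos : ∀ t ∈ Set.Icc s T, ρ < x t := by
    intro t ht
    by_contra hle
    push_neg at hle
    have hst : s ≤ t := ht.1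
    have : ρ ∈ Set.Icc (x t) (x s) := ⟨hle, by rw [hinit]; linarith⟩
    obtain ⟨c, hc1, hc2⟩ := intermediate_value_Icc' hst
      (hcont.mono (Set.Icc_subset_Icc le_rfl ht.2)) this
    have hcs : s < c := by
      rcases lt_or_eq_of_le hc1.1 with h' | h'
      · exact h'
      · exfalso; rw [← h', hinit] at hc2; linarith
    exact hcon c hcs (hc1.2.trans ht.2) hc2
  -- g is antitone
  set g : ℝ → ℝ := fun t => x t + ρ * t with hg
  have hgderiv : ∀ t ∈ Set.Icc s T, HasDerivAt g (h t (x t) + ρ) t := by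
    intro t ht
    have : HasDerivAt (fun t : ℝ => ρ * t) ρ t := by
      simpa using (hasDerivAt_id t).const_mul ρ
    exact (hsol t ht).add this
  have hanti : AntitoneOn g (Set.Icc s T) := by
    apply antitoneOn_of_deriv_nonpos (convex_Icc s T)
    · intro t ht
      exact ((hgderiv t ht).continuousAt).continuousWithinAt
    · intro t ht
      rw [interior_Icc] at ht
      exact ((hgderiv t (Set.mem_Icc_of_Ioo ht)).differentiableAt).differentiableWithinAt
    · intro t ht
      rw [interior_Icc] at ht
      have ht' : t ∈ Set.Icc s T := Set.mem_Icc_of_Ioo ht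
      rw [(hgderiv t ht').deriv]
      have hxt : ρ < x t := hpos t ht'
      have hxpos : 0 < x t := lt_trans hρ hxt
      have := hcoer t (x t) (by rw [abs_of_pos hxpos]; linarith)
      rw [div_le_iff₀ hxpos] at this
      linarith
  have hgle := hanti (Set.left_mem_Icc.2 hsT.le) (Set.right_mem_Icc.2 hsT.le) hsT.le
  have hxT : ρ < x T := hpos T (Set.right_mem_Icc.2 hsT.le)
  have hTs : ρ * (T - s) = x₀ - ρ := by
    rw [hTdef]; field_simp; ring
  simp only [hg, hinit] at hgle
  nlinarith
end

section
/- Let h : ℝ × ℝ → ℝ be continuous with continuous partial derivative h_x, and suppose h(t,x)/x → -∞ as |x| → ∞ uniformly in t ∈ ℝ. Then every maximal solution of x' = h(t,x) is defined on a forward half-line [s,∞) and is bounded on [s,∞). -/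
open Set

theorem stmt2 (h : ℝ → ℝ → ℝ) (hx' : ℝ → ℝ → ℝ)
    (hc : Continuous fun p : ℝ × ℝ => h p.1 p.2)
    (hd : ∀ t x, HasDerivAt (h t) (hx' t x) x)
    (hdc : Continuous fun p : ℝ × ℝ => hx' p.1 p.2)
    (hcoer : ∀ M > (0:ℝ), ∃ ρ > (0:ℝ), ∀ t x : ℝ, ρ ≤ |x| → h t x / x ≤ -M) :
    ∀ s x₀ : ℝ, ∃ x : ℝ → ℝ, x s = x₀ ∧
      (∀ t ∈ Set.Ici s, HasDerivAt x (h t (x t)) t) ∧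
      ∃ C, ∀ t ∈ Set.Ici s, |x t| ≤ C := by
  intro s x₀
  obtain ⟨ρ, hρpos, hρ⟩ := hcoer 1 one_pos
  set R₀ : ℝ := max |x₀| ρ + 1 with hR₀def
  have hR₀pos : 0 < R₀ := by positivity
  have hx₀R : |x₀| < R₀ := by
    have := le_max_left |x₀| ρ; rw [hR₀def]; linarith
  have hρR : ρ ≤ R₀ := by
    have := le_max_right |x₀| ρ; rw [hR₀def]; linarith
  -- the clamp function
  set cl : ℝ → ℝ := fun x => max (-R₀) (min x R₀) with hcldef
  have hcl_mem : ∀ x, cl x ∈ Icc (-R₀) R₀ :=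
    fun x => ⟨le_max_left _ _, max_le (by linarith) (min_le_right _ _)⟩
  have hcl_eq : ∀ x, |x| ≤ R₀ → cl x = x := by
    intro x hx
    rw [abs_le] at hx
    simp [hcldef, min_eq_left hx.2, max_eq_right hx.1]
  have hcl_dist : ∀ a b : ℝ, |cl a - cl b| ≤ |a - b| := by
    intro a b
    show |max (-R₀) (min a R₀) - max (-R₀) (min b R₀)| ≤ |a - b|
    rw [max_comm (-R₀) (min a R₀), max_comm (-R₀) (min b R₀)]
    calc |max (min a R₀) (-R₀) - max (min b R₀) (-R₀)|
        ≤ |min a R₀ - min b R₀| := abs_max_sub_max_le_abs _ _ _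
      _ ≤ max |a - b| |R₀ - R₀| := abs_min_sub_min_le_max _ _ _ _
      _ = |a - b| := by simp
  have hcl_cont : Continuous cl := continuous_const.max (continuous_id.min continuous_const)
  -- the clamped vector field
  set g : ℝ → ℝ → ℝ := fun t x => h t (cl x) with hgdef
  have hgc : Continuous fun p : ℝ × ℝ => g p.1 p.2 :=
    hc.comp (continuous_fst.prodMk (hcl_cont.comp continuous_snd))
  -- sign condition
  have hsign : ∀ t x : ℝ, R₀ ≤ |x| → x * g t x ≤ 0 := by
    intro t x hx
    rcases le_abs.mp hx with hx1 | hx1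
    · have hclx : cl x = R₀ := by
        simp [hcldef, min_eq_right hx1, max_eq_right (by linarith : -R₀ ≤ R₀)]
      have := hρ t R₀ (by rwa [abs_of_pos hR₀pos])
      rw [div_le_iff₀ hR₀pos] at this
      have hg : g t x ≤ -R₀ := by rw [hgdef]; simp only [hclx]; nlinarith
      nlinarith
    · have hclx : cl x = -R₀ := by
        simp [hcldef, min_eq_left (by linarith : x ≤ R₀), max_eq_left (by linarith : x ≤ -R₀)]
      have := hρ t (-R₀) (by rwa [abs_neg, abs_of_pos hR₀pos])
      rw [div_le_iff_of_neg (by linarith : -R₀ < 0)] at this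
      have hg : R₀ ≤ g t x := by rw [hgdef]; simp only [hclx]; nlinarith
      nlinarith
  -- local Lipschitz constants (uniform in x)
  have hliploc : ∀ a b : ℝ, ∃ L : NNReal, ∀ t ∈ Icc a b, LipschitzWith L (g t) := by
    intro a b
    have hK : IsCompact (Icc a b ×ˢ Icc (-R₀) R₀) := (isCompact_Icc.prod isCompact_Icc)
    obtain ⟨C', hC'⟩ := hK.exists_bound_of_continuousOn hdc.continuousOn
    set L0 : ℝ := max C' 0 with hL0def
    have hL0 : 0 ≤ L0 := le_max_right _ _
    refine ⟨⟨L0, hL0⟩, fun t ht => ?_⟩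
    have hlipOn : LipschitzOnWith ⟨L0, hL0⟩ (h t) (Icc (-R₀) R₀) := by
      apply (convex_Icc _ _).lipschitzOnWith_of_nnnorm_hasDerivWithin_le
        (f' := fun x => hx' t x) (fun x hx => (hd t x).hasDerivWithinAt)
      intro x hx
      refine NNReal.coe_le_coe.mp ?_
      simp only [coe_nnnorm, NNReal.coe_mk]
      exact le_trans (hC' (t, x) ⟨ht, hx⟩) (le_max_left _ _)
    apply LipschitzWith.of_dist_le_mul
    intro p q
    calc dist (g t p) (g t q) ≤ L0 * dist (cl p) (cl q) :=
          hlipOn.dist_le_mul _ (hcl_mem p) _ (hcl_mem q)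
      _ ≤ L0 * dist p q := by
          apply mul_le_mul_of_nonneg_left _ hL0
          rw [Real.dist_eq, Real.dist_eq]; exact hcl_dist p q
  -- local bounds (uniform in x)
  have hbddloc : ∀ a b : ℝ, ∃ C ≥ (0:ℝ), ∀ t ∈ Icc a b, ∀ x : ℝ, ‖g t x‖ ≤ C := by
    intro a b
    have hK : IsCompact (Icc a b ×ˢ Icc (-R₀) R₀) := (isCompact_Icc.prod isCompact_Icc)
    obtain ⟨C', hC'⟩ := hK.exists_bound_of_continuousOn hc.continuousOn
    refine ⟨max C' 0, le_max_right _ _, fun t ht x => ?_⟩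
    exact le_trans (hC' (t, cl x) ⟨ht, hcl_mem x⟩) (le_max_left _ _)
  -- existence of a solution of the clamped ODE on each interval
  have hexist : ∀ n : ℕ, ∃ f : ℝ → ℝ, f s = x₀ ∧
      ∀ t ∈ Icc (s - (n+1)) (s + (n+1)),
        HasDerivWithinAt f (g t (f t)) (Icc (s - (n+1)) (s + (n+1))) t := by
    intro n
    obtain ⟨L, hL⟩ := hliploc (s - (n+1)) (s + (n+1))
    obtain ⟨C, hC0, hC⟩ := hbddloc (s - (n+1)) (s + (n+1))
    have hn1 : (0:ℝ) < n + 1 := by positivity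
    have hpl : IsPicardLindelof g (tmin := s - (n+1)) (tmax := s + (n+1))
        ⟨s, by constructor <;> linarith⟩ x₀ ⟨C * (n+1) + 1, by positivity⟩ 0 ⟨C, hC0⟩ L :=
      { lipschitzOnWith := fun t ht => (hL t ht).lipschitzOnWith
        continuousOn := fun x _ => (hgc.comp (continuous_id.prodMk continuous_const)).continuousOn
        norm_le := fun t ht x _ => hC t ht x
        mul_max_le := by
          simp only [NNReal.coe_mk, NNReal.coe_zero, sub_zero]
          rw [show s + ((n:ℝ)+1) - s = (n:ℝ)+1 by ring, show s - (s - ((n:ℝ)+1)) = (n:ℝ)+1 by ring,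
            max_self]
          show C * ((n:ℝ) + 1) ≤ C * ((n:ℝ) + 1) + 1
          nlinarith }
    exact hpl.exists_eq_forall_mem_Icc_hasDerivWithinAt₀
  choose f hf0 hfd using hexist
  have hfc : ∀ n : ℕ, ContinuousOn (f n) (Icc (s - (n+1)) (s + (n+1))) :=
    fun n t ht => (hfd n t ht).continuousWithinAt
  have hfd' : ∀ n : ℕ, ∀ t ∈ Ioo (s - (n+1:ℝ)) (s + (n+1)), HasDerivAt (f n) (g t (f n t)) t := by
    intro n t ht
    exact (hfd n t (Ioo_subset_Icc_self ht)).hasDerivAt (Icc_mem_nhds ht.1 ht.2)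
  -- uniqueness: the solutions agree
  have hagree : ∀ n m : ℕ, n ≤ m →
      EqOn (f n) (f m) (Icc (s - (n+1:ℝ)) (s + (n+1))) := by
    intro n m hnm
    have hn1 : (0:ℝ) < n + 1 := by positivity
    have hsub : Ioo (s - (n+1:ℝ)) (s + (n+1)) ⊆ Ioo (s - (m+1:ℝ)) (s + (m+1)) := by
      apply Ioo_subset_Ioo <;> · have : (n:ℝ) ≤ m := Nat.cast_le.mpr hnm; linarith
    obtain ⟨L, hL⟩ := hliploc (s - (n+1)) (s + (n+1))
    apply ODE_solution_unique_of_mem_Icc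
      (v := g) (s := fun t => if t ∈ Icc (s - (n+1:ℝ)) (s + (n+1)) then (univ : Set ℝ) else ∅)
      (K := L) (t₀ := s)
    · intro t _
      by_cases ht : t ∈ Icc (s - (n+1:ℝ)) (s + (n+1))
      · rw [if_pos ht]; exact (hL t ht).lipschitzOnWith
      · rw [if_neg ht]; exact lipschitzOnWith_empty _ _
    · exact ⟨by linarith, by linarith⟩
    · exact hfc n
    · exact hfd' n
    · intro t ht; rw [if_pos (Ioo_subset_Icc_self ht)]; trivial
    · exact (hfc m).mono (Icc_subset_Icc (by have : (n:ℝ) ≤ m := Nat.cast_le.mpr hnm; linarith)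
        (by have : (n:ℝ) ≤ m := Nat.cast_le.mpr hnm; linarith))
    · intro t ht; exact hfd' m t (hsub ht)
    · intro t ht; rw [if_pos (Ioo_subset_Icc_self ht)]; trivial
    · rw [hf0 n, hf0 m]
  -- the a priori bound: solutions stay in [-R₀, R₀] forward in time
  have hbd2 : ∀ n : ℕ, ∀ t ∈ Icc s (s + (n+1:ℝ)), (f n t)^2 ≤ R₀^2 := by
    intro n t ht
    by_contra hcon
    push_neg at hcon
    have hn1 : (0:ℝ) < n + 1 := by positivity
    set F : ℝ → ℝ := fun u => (f n u)^2 with hFdef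
    have hFs : F s ≤ R₀^2 := by
      show (f n s)^2 ≤ R₀^2
      rw [hf0 n]; nlinarith [abs_nonneg x₀, sq_abs x₀]
    set S : Set ℝ := {u | u ∈ Icc s t ∧ F u ≤ R₀^2} with hSdef
    have hFcont : ContinuousOn F (Icc s t) := by
      apply ContinuousOn.pow
      exact (hfc n).mono (Icc_subset_Icc (by linarith [ht.1]) (by linarith [ht.2]))
    have hScomp : IsCompact S := by
      have hSeq : S = Icc s t ∩ F ⁻¹' Iic (R₀^2) := by
        ext u; simp [hSdef]
      rw [hSeq]
      exact isCompact_Icc.of_isClosed_subset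
        (hFcont.preimage_isClosed_of_isClosed isClosed_Icc isClosed_Iic)
        inter_subset_left
    have hSne : S.Nonempty := ⟨s, ⟨le_refl s, ht.1⟩, hFs⟩
    set c : ℝ := sSup S with hcdef
    have hcS : c ∈ S := hScomp.sSup_mem hSne
    have hct : c < t :=
      lt_of_le_of_ne hcS.1.2 (fun h' => absurd (h' ▸ hcS.2) (not_le.mpr hcon))
    have hgt : ∀ u ∈ Ioc c t, R₀^2 < F u := by
      intro u hu
      by_contra h'
      push_neg at h'
      have huS : u ∈ S := ⟨⟨le_trans hcS.1.1 (le_of_lt hu.1), hu.2⟩, h'⟩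
      have : u ≤ c := le_csSup hScomp.bddAbove huS
      exact absurd hu.1 (not_lt.mpr this)
    -- F is antitone on [c, t]
    have hderiv : ∀ u ∈ Ioo c t, HasDerivAt F (2 * f n u * g u (f n u)) u := by
      intro u hu
      have hu' : u ∈ Ioo (s - (n+1:ℝ)) (s + (n+1)) :=
        ⟨by have := hcS.1.1; linarith [hu.1], lt_of_lt_of_le hu.2 ht.2⟩
      have : HasDerivAt (fun i => f n i ^ 2) (((2:ℕ):ℝ) * f n u ^ (2 - 1) * g u (f n u)) u :=
        ((hfd' n u hu').fun_pow 2)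
      convert this using 1
      ring
    have hanti : AntitoneOn F (Icc c t) := by
      apply antitoneOn_of_deriv_nonpos (convex_Icc c t)
      · exact hFcont.mono (Icc_subset_Icc hcS.1.1 (le_refl t))
      · intro u hu
        rw [interior_Icc] at hu
        exact (hderiv u hu).differentiableAt.differentiableWithinAt
      · intro u hu
        rw [interior_Icc] at hu
        rw [(hderiv u hu).deriv]
        have hRu : R₀ ≤ |f n u| := by
          have h3 := hgt u (Ioo_subset_Ioc_self hu)
          simp only [hFdef] at h3
          nlinarith [abs_nonneg (f n u), sq_abs (f n u), hR₀pos]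
        have := hsign u (f n u) hRu
        nlinarith
    have : F t ≤ F c :=
      hanti ⟨le_refl c, le_of_lt hct⟩ ⟨le_of_lt hct, le_refl t⟩ (le_of_lt hct)
    have := le_trans this hcS.2
    exact absurd this (not_le.mpr hcon)
  -- the glued solution
  set x : ℝ → ℝ := fun t => f ⌊t - s⌋₊ t with hxdef
  have hxf : ∀ n : ℕ, ∀ t ∈ Ioo (s - 1) (s + (n+1:ℝ)), x t = f n t := by
    intro n t ht
    set k : ℕ := ⌊t - s⌋₊ with hkdef
    set N : ℕ := max k n with hNdef
    have htk : t ∈ Icc (s - (k+1:ℝ)) (s + (k+1)) := by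
      constructor
      · have : (0:ℝ) ≤ k := Nat.cast_nonneg k
        linarith [ht.1]
      · have := Nat.lt_floor_add_one (t - s)
        rw [← hkdef] at this
        linarith
    have htn : t ∈ Icc (s - (n+1:ℝ)) (s + (n+1)) := by
      constructor
      · have : (0:ℝ) ≤ n := Nat.cast_nonneg n
        linarith [ht.1]
      · exact le_of_lt ht.2
    have h1 : f k t = f N t := hagree k N (le_max_left _ _) htk
    have h2 : f n t = f N t := hagree n N (le_max_right _ _) htn
    rw [hxdef]
    simp only [← hkdef]
    rw [h1, h2]
  have hxbd : ∀ t ∈ Ici s, |x t| ≤ R₀ := by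
    intro t ht
    rw [mem_Ici] at ht
    set n : ℕ := ⌊t - s⌋₊ with hndef
    have ht2 : t < s + (n+1:ℝ) := by
      have := Nat.lt_floor_add_one (t - s); rw [← hndef] at this; linarith
    have hx1 : x t = f n t := hxf n t ⟨by linarith, ht2⟩
    have := hbd2 n t ⟨ht, le_of_lt ht2⟩
    rw [hx1]
    nlinarith [abs_nonneg (f n t), sq_abs (f n t)]
  refine ⟨x, ?_, ?_, R₀, hxbd⟩
  · rw [hxdef]; simp only [sub_self, Nat.floor_zero]; exact hf0 0
  · intro t ht
    rw [mem_Ici] at ht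
    set n : ℕ := ⌊t - s⌋₊ with hndef
    have ht2 : t < s + (n+1:ℝ) := by
      have := Nat.lt_floor_add_one (t - s); rw [← hndef] at this; linarith
    have hn1 : (0:ℝ) < n + 1 := by positivity
    have hmem : t ∈ Ioo (s - 1) (s + (n+1:ℝ)) := ⟨by linarith, ht2⟩
    have hda : HasDerivAt (f n) (g t (f n t)) t :=
      hfd' n t ⟨by linarith, ht2⟩
    have hev : x =ᶠ[nhds t] f n :=
      Filter.eventually_of_mem (Ioo_mem_nhds hmem.1 hmem.2) (hxf n)
    have hxt : x t = f n t := hxf n t hmem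
    have hgx : g t (x t) = h t (x t) := by
      rw [hgdef]
      simp only [hcl_eq (x t) (hxbd t ht)]
    have : HasDerivAt x (g t (f n t)) t := hda.congr_of_eventuallyEq hev
    rw [← hgx, hxt]
    exact this
end

section
/- Let h₁, h₂ : ℝ × ℝ → ℝ be continuous with continuous partial derivatives in x, coercive (h_i(t,x)/x → -∞ as |x| → ∞ uniformly in t), and satisfy h₁(t,x) ≤ h₂(t,x) for all (t,x). Assume each equation x' = h_i(t,x) admits globally bounded solutions, and let u_i (resp. l_i) denote the pointwise supremum (resp. infimum) over all globally defined bounded solutions of x' = h_i(t,x), which are themselves bounded solutions. Then l₁(t) ≤ l₂(t) and u₁(t) ≤ u₂(t) for all t ∈ ℝ. -/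
open Set Filter Topology MeasureTheory

/-- A globally defined bounded solution of `x' = h t x`. -/
def BddSol (h : ℝ → ℝ → ℝ) (x : ℝ → ℝ) : Prop :=
  (∀ t, HasDerivAt x (h t (x t)) t) ∧ ∃ C, ∀ t, |x t| ≤ C


/-- Upper invariance: if the vector field is negative above `K` and `y a ≤ K`,
then `y` stays `≤ K` on `[a,b]`. -/
lemma inv_up {h : ℝ → ℝ → ℝ} {K a b : ℝ} {y : ℝ → ℝ}
    (hneg : ∀ t x, K ≤ x → h t x < 0)
    (hy : ∀ t ∈ Icc a b, HasDerivWithinAt y (h t (y t)) (Icc a b) t)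
    (ha : a ∈ Icc a b) (hya : y a ≤ K) : ∀ t ∈ Icc a b, y t ≤ K := by
  intro t ht
  by_contra hcon
  push_neg at hcon
  have hcy : ContinuousOn y (Icc a b) := fun s hs => (hy s hs).continuousWithinAt
  set S : Set ℝ := {r ∈ Icc a t | y r ≤ K} with hS
  have hsub : Icc a t ⊆ Icc a b := Icc_subset_Icc le_rfl ht.2
  have hScl : IsClosed S := by
    have : ContinuousOn y (Icc a t) := hcy.mono hsub
    exact this.preimage_isClosed_of_isClosed isClosed_Icc isClosed_Iic
  have hScpt : IsCompact S :=
    isCompact_Icc.of_isClosed_subset hScl (sep_subset _ _)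
  have haS : a ∈ S := ⟨⟨le_rfl, ht.1⟩, hya⟩
  set s := sSup S with hs_def
  have hsS : s ∈ S := hScpt.sSup_mem ⟨a, haS⟩
  have hst : s < t := lt_of_le_of_ne hsS.1.2 (fun hh => by rw [hh] at hsS; exact absurd hsS.2 (not_le.2 hcon))
  have hgt : ∀ r ∈ Ioc s t, K < y r := by
    intro r hr
    by_contra hyr
    push_neg at hyr
    have : r ∈ S := ⟨⟨hsS.1.1.trans hr.1.le, hr.2⟩, hyr⟩
    exact absurd (le_csSup hScpt.bddAbove this) (not_le.2 hr.1)
  have hanti : StrictAntiOn y (Icc s t) := by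
    apply strictAntiOn_of_deriv_neg (convex_Icc s t) (hcy.mono (Icc_subset_Icc hsS.1.1 ht.2))
    intro r hr
    rw [interior_Icc] at hr
    have hrab : r ∈ Icc a b := ⟨hsS.1.1.trans hr.1.le, hr.2.le.trans ht.2⟩
    have hd : HasDerivAt y (h r (y r)) r :=
      (hy r hrab).hasDerivAt (Icc_mem_nhds (lt_of_le_of_lt hsS.1.1 hr.1) (lt_of_lt_of_le hr.2 ht.2))
    rw [hd.deriv]
    exact hneg r (y r) (hgt r ⟨hr.1, hr.2.le⟩).le
  have : y t < y s := hanti ⟨le_rfl, hst.le⟩ ⟨hst.le, le_rfl⟩ hst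
  exact absurd (this.trans_le hsS.2) (not_lt.2 hcon.le)

/-- Lower invariance, by reflection. -/
lemma inv_lo {h : ℝ → ℝ → ℝ} {K a b : ℝ} {y : ℝ → ℝ}
    (hpos : ∀ t x, x ≤ -K → 0 < h t x)
    (hy : ∀ t ∈ Icc a b, HasDerivWithinAt y (h t (y t)) (Icc a b) t)
    (ha : a ∈ Icc a b) (hya : -K ≤ y a) : ∀ t ∈ Icc a b, -K ≤ y t := by
  have := inv_up (h := fun t x => -h t (-x)) (K := K) (a := a) (b := b) (y := fun t => -y t)
    (fun t x hx => by simpa using hpos t (-x) (by linarith))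
    (fun t htt => by have h2 := (hy t htt).neg; simp only [neg_neg]; exact h2) ha (show -y a ≤ K by linarith)
  intro t ht
  have := this t ht
  simp only [neg_le] at this ⊢
  linarith


/-- One-sided comparison on `[a,b]` via a Grönwall argument. -/
lemma comp_le {a b L : ℝ} {w y gw gy : ℝ → ℝ}
    (hL : 0 ≤ L)
    (hw : ∀ t ∈ Icc a b, HasDerivWithinAt w (gw t) (Icc a b) t)
    (hy : ∀ t ∈ Icc a b, HasDerivWithinAt y (gy t) (Icc a b) t)
    (hbound : ∀ t ∈ Icc a b, y t ≤ w t → gw t - gy t ≤ L * (w t - y t))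
    (hwa : w a ≤ y a) : ∀ t ∈ Icc a b, w t ≤ y t := by
  intro t ht
  by_contra hcon
  push_neg at hcon
  set e : ℝ → ℝ := fun r => w r - y r with he
  have hce : ContinuousOn e (Icc a b) :=
    fun s hs => ((hw s hs).sub (hy s hs)).continuousWithinAt
  set S : Set ℝ := {r ∈ Icc a t | e r ≤ 0} with hS
  have hsub : Icc a t ⊆ Icc a b := Icc_subset_Icc le_rfl ht.2
  have hScl : IsClosed S :=
    (hce.mono hsub).preimage_isClosed_of_isClosed isClosed_Icc isClosed_Iic
  have hScpt : IsCompact S := isCompact_Icc.of_isClosed_subset hScl (sep_subset _ _)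
  have haS : a ∈ S := ⟨⟨le_rfl, ht.1⟩, by simp only [he]; linarith⟩
  set s := sSup S with hs_def
  have hsS : s ∈ S := hScpt.sSup_mem ⟨a, haS⟩
  have hst : s < t := lt_of_le_of_ne hsS.1.2 (fun hh => by
    rw [hh] at hsS; have h2 := hsS.2; simp only [he] at h2; linarith)
  have hsb : s < b := lt_of_lt_of_le hst ht.2
  have has : a ≤ s := hsS.1.1
  have hsmem : s ∈ Icc a b := ⟨has, hsb.le⟩
  have hgt : ∀ r ∈ Ioc s t, 0 < e r := by
    intro r hr
    by_contra hyr
    push_neg at hyr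
    have : r ∈ S := ⟨⟨has.trans hr.1.le, hr.2⟩, hyr⟩
    exact absurd (le_csSup hScpt.bddAbove this) (not_le.2 hr.1)
  have hes0 : 0 ≤ e s := by
    have hmem : Icc a b ∈ 𝓝[>] s :=
      mem_of_superset (Ioc_mem_nhdsGT_of_mem ⟨le_rfl, hsb⟩)
        (fun r hr => ⟨has.trans hr.1.le, hr.2⟩)
    have htend : Tendsto e (𝓝[>] s) (𝓝 (e s)) :=
      (hce s hsmem).mono_left (nhdsWithin_le_of_mem hmem)
    refine ge_of_tendsto htend ?_
    filter_upwards [Ioc_mem_nhdsGT_of_mem ⟨le_rfl, hst⟩] with r hr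
    exact (hgt r hr).le
  have hg := le_gronwallBound_of_liminf_deriv_right_le (f := e)
      (f' := fun r => gw r - gy r) (δ := 0) (K := L) (ε := 0) (a := s) (b := t)
      (hce.mono (Icc_subset_Icc has ht.2))
      (by
        intro r hr ρ hρ
        have hrab : r ∈ Icc a b := ⟨has.trans hr.1, hr.2.le.trans ht.2⟩
        have hd : HasDerivWithinAt e (gw r - gy r) (Ici r) r :=
          ((hw r hrab).sub (hy r hrab)).mono_of_mem_nhdsWithin
            (Icc_mem_nhdsGE_of_mem ⟨has.trans hr.1, hr.2.trans_le ht.2⟩)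
        have := hd.liminf_right_slope_le hρ
        refine this.mono fun z hz => ?_
        rwa [slope_def_field, div_eq_inv_mul] at hz)
      (by linarith [hsS.2])
      (by
        intro r hr
        have hrab : r ∈ Icc a b := ⟨has.trans hr.1, hr.2.le.trans ht.2⟩
        have her : 0 ≤ e r := by
          rcases eq_or_lt_of_le hr.1 with h | h
          · rw [← h]; exact hes0
          · exact (hgt r ⟨h, hr.2.le⟩).le
        have hb := hbound r hrab (by simp only [he] at her; linarith)
        simp only [he] at her ⊢
        linarith)
  have het := hg t ⟨hst.le, le_rfl⟩
  rw [gronwallBound_ε0, zero_mul] at het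
  simp only [he] at het
  linarith

lemma global_exist {h hx : ℝ → ℝ → ℝ}
    (hc : Continuous fun p : ℝ × ℝ => h p.1 p.2)
    (hd : ∀ t x, HasDerivAt (h t) (hx t x) x)
    (hdc : Continuous fun p : ℝ × ℝ => hx p.1 p.2)
    {K : ℝ} (hK : 0 ≤ K)
    (hneg : ∀ t x, K ≤ x → h t x < 0) (hpos : ∀ t x, x ≤ -K → 0 < h t x)
    {a b x₀ : ℝ} (hab : a ≤ b) (hx₀ : |x₀| ≤ K) :
    ∃ y : ℝ → ℝ, y a = x₀ ∧ (∀ t ∈ Icc a b, HasDerivWithinAt y (h t (y t)) (Icc a b) t)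
      ∧ ∀ t ∈ Icc a b, |y t| ≤ K := by
  have hcpt : IsCompact (Icc a b ×ˢ Icc (-(K+1)) (K+1)) := isCompact_Icc.prod isCompact_Icc
  obtain ⟨C₀, hC₀⟩ := hcpt.exists_bound_of_continuousOn hc.continuousOn
  obtain ⟨L₀, hL₀⟩ := hcpt.exists_bound_of_continuousOn hdc.continuousOn
  set C : ℝ := max C₀ 1 with hC
  have hC1 : 1 ≤ C := le_max_right _ _
  have hCpos : 0 < C := lt_of_lt_of_le one_pos hC1
  set L : NNReal := ⟨max L₀ 0, le_max_right _ _⟩ with hL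
  set ε : ℝ := 1 / C with hε
  have hεpos : 0 < ε := by positivity
  have hball : ∀ x₁ : ℝ, |x₁| ≤ K → Metric.closedBall x₁ 1 ⊆ Icc (-(K+1)) (K+1) := by
    intro x₁ hx₁ z hz
    rw [Metric.mem_closedBall, Real.dist_eq] at hz
    rw [abs_le] at hx₁
    rw [abs_le] at hz
    exact ⟨by linarith [hz.1], by linarith [hz.2]⟩
  -- single Picard-Lindelöf step
  have step : ∀ s x₁, a ≤ s → s ≤ b → |x₁| ≤ K →
      ∃ z : ℝ → ℝ, z s = x₁ ∧
        ∀ t ∈ Icc s (min (s+ε) b), HasDerivWithinAt z (h t (z t)) (Icc s (min (s+ε) b)) t := by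
    intro s x₁ has hsb hx₁
    have hpl : IsPicardLindelof (fun t x => h t x) (tmin := s) (tmax := min (s+ε) b)
        ⟨s, le_rfl, le_min (by linarith) hsb⟩ x₁ 1 0 ⟨C, hCpos.le⟩ L := by
      refine ⟨?_, ?_, ?_, ?_⟩
      · intro t htt
        apply Convex.lipschitzOnWith_of_nnnorm_hasDerivWithin_le (convex_closedBall _ _)
          (fun z _ => (hd t z).hasDerivWithinAt)
        intro z hz
        have hzb : z ∈ Icc (-(K+1)) (K+1) := hball x₁ hx₁ hz
        have htab : t ∈ Icc a b := ⟨has.trans htt.1, htt.2.trans (min_le_right _ _)⟩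
        have h1 := hL₀ (t, z) (Set.mk_mem_prod htab hzb)
        have h2 : ‖hx t z‖ ≤ (L : ℝ) := h1.trans (le_max_left _ _)
        exact_mod_cast h2
      · intro z _
        exact (hc.comp (continuous_id.prodMk continuous_const)).continuousOn
      · intro t htt z hz
        have hzb : z ∈ Icc (-(K+1)) (K+1) := hball x₁ hx₁ hz
        have htab : t ∈ Icc a b := ⟨has.trans htt.1, htt.2.trans (min_le_right _ _)⟩
        exact (hC₀ (t, z) (Set.mk_mem_prod htab hzb)).trans (le_max_left _ _)
      · simp only [NNReal.coe_one, NNReal.coe_zero, sub_zero, NNReal.coe_mk]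
        show C * max (min (s+ε) b - s) (s - s) ≤ 1
        have h1 : max (min (s+ε) b - s) (s - s) ≤ ε := by
          apply max_le _ (by linarith)
          have := min_le_left (s+ε) b
          linarith
        calc C * max (min (s+ε) b - s) (s - s) ≤ C * ε :=
              mul_le_mul_of_nonneg_left h1 hCpos.le
          _ = 1 := by rw [hε, mul_one_div_cancel hCpos.ne']
    obtain ⟨z, hz0, hzd⟩ := hpl.exists_eq_forall_mem_Icc_hasDerivWithinAt₀
    exact ⟨z, hz0, hzd⟩
  have key : ∀ n : ℕ, ∃ y : ℝ → ℝ, y a = x₀ ∧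
      (∀ t ∈ Icc a (min (a + n * ε) b),
        HasDerivWithinAt y (h t (y t)) (Icc a (min (a + n * ε) b)) t) ∧
      ∀ t ∈ Icc a (min (a + n * ε) b), |y t| ≤ K := by
    intro n
    induction n with
    | zero =>
      have hmin : min (a + (0:ℕ) * ε) b = a := by
        push_cast; rw [zero_mul, add_zero]; exact min_eq_left hab
      rw [hmin]
      refine ⟨fun _ => x₀, rfl, ?_, ?_⟩
      · intro t htt
        rw [Icc_self, mem_singleton_iff] at htt
        rw [Icc_self, hasDerivWithinAt_iff_tendsto_slope, htt]
        have he : ({a} : Set ℝ) \ {a} = (∅ : Set ℝ) := Set.sdiff_self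
        rw [he, nhdsWithin_empty]
        exact tendsto_bot
      · intro t htt
        rw [Icc_self, mem_singleton_iff] at htt
        rw [htt]
        exact hx₀
    | succ n ih =>
      obtain ⟨y, hy0, hyd, hyb⟩ := ih
      have hcast : (((n+1 : ℕ)) : ℝ) * ε = (n : ℝ) * ε + ε := by push_cast; ring
      by_cases hcase : b ≤ a + (n : ℝ) * ε
      · have h1 : min (a + (n:ℕ) * ε) b = b := min_eq_right hcase
        have h2 : min (a + ((n+1:ℕ):ℝ) * ε) b = b := by
          apply min_eq_right; rw [hcast]; linarith
        rw [h2]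
        rw [h1] at hyd hyb
        exact ⟨y, hy0, hyd, hyb⟩
      · push_neg at hcase
        have hs_eq : min (a + (n:ℕ) * ε) b = a + (n:ℝ) * ε := min_eq_left hcase.le
        set s : ℝ := a + (n:ℝ) * ε with hsdef
        rw [hs_eq] at hyd hyb
        have hnn : (0:ℝ) ≤ (n : ℝ) * ε := by positivity
        have has : a ≤ s := by rw [hsdef]; linarith
        have hsb : s ≤ b := hcase.le
        have hm_eq : min (a + ((n+1:ℕ):ℝ) * ε) b = min (s + ε) b := by
          rw [hcast, hsdef]; ring_nf
        rw [hm_eq]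
        set m : ℝ := min (s + ε) b with hmdef
        have hsm : s ≤ m := le_min (by linarith) hsb
        have ham : a ≤ m := has.trans hsm
        have hys : |y s| ≤ K := hyb s ⟨has, le_rfl⟩
        obtain ⟨z, hz0, hzd⟩ := step s (y s) has hsb hys
        rw [← hmdef] at hzd
        have hzb : ∀ t ∈ Icc s m, |z t| ≤ K := by
          intro t htt
          rw [abs_le]
          refine ⟨?_, ?_⟩
          · exact inv_lo hpos hzd ⟨le_rfl, hsm⟩ (by rw [hz0]; linarith [(abs_le.1 hys).1]) t htt
          · exact inv_up hneg hzd ⟨le_rfl, hsm⟩ (by rw [hz0]; linarith [(abs_le.1 hys).2]) t htt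
        set Y : ℝ → ℝ := fun t => if t ≤ s then y t else z t with hY
        have hEq1 : ∀ r ∈ Icc a s, Y r = y r := fun r hr => if_pos hr.2
        have hEq2 : ∀ r ∈ Icc s m, Y r = z r := by
          intro r hr
          by_cases hrs : r ≤ s
          · have : r = s := le_antisymm hrs hr.1
            subst this
            simp [hY, hz0]
          · exact if_neg hrs
        have hunion : Icc a s ∪ Icc s m = Icc a m := Icc_union_Icc_eq_Icc has hsm
        refine ⟨Y, by rw [hEq1 a ⟨le_rfl, has⟩]; exact hy0, ?_, ?_⟩
        · intro t ht
          have d1 : HasDerivWithinAt Y (h t (Y t)) (Icc a s) t := by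
            by_cases hts : t ≤ s
            · have htm : t ∈ Icc a s := ⟨ht.1, hts⟩
              have := (hyd t htm).congr hEq1 (hEq1 t htm)
              rwa [hEq1 t htm]
            · apply HasFDerivWithinAt.of_notMem_closure
              rw [isClosed_Icc.closure_eq]
              exact fun hc' => hts hc'.2
          have d2 : HasDerivWithinAt Y (h t (Y t)) (Icc s m) t := by
            by_cases hts : s ≤ t
            · have htm : t ∈ Icc s m := ⟨hts, ht.2⟩
              have := (hzd t htm).congr hEq2 (hEq2 t htm)
              rwa [hEq2 t htm]
            · apply HasFDerivWithinAt.of_notMem_closure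
              rw [isClosed_Icc.closure_eq]
              exact fun hc' => hts hc'.1
          have := d1.union d2
          rwa [hunion] at this
        · intro t ht
          by_cases hts : t ≤ s
          · rw [hEq1 t ⟨ht.1, hts⟩]; exact hyb t ⟨ht.1, hts⟩
          · push_neg at hts
            rw [hEq2 t ⟨hts.le, ht.2⟩]; exact hzb t ⟨hts.le, ht.2⟩
  obtain ⟨n, hn⟩ := exists_nat_ge ((b - a) / ε)
  obtain ⟨y, hy0, hyd, hyb⟩ := key n
  have hminb : min (a + (n:ℝ) * ε) b = b := by
    apply min_eq_right
    rw [div_le_iff₀ hεpos] at hn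
    linarith
  rw [hminb] at hyd hyb
  exact ⟨y, hy0, hyd, hyb⟩

lemma key_lemma {h hx : ℝ → ℝ → ℝ}
    (hc : Continuous fun p : ℝ × ℝ => h p.1 p.2)
    (hd : ∀ t x, HasDerivAt (h t) (hx t x) x)
    (hdc : Continuous fun p : ℝ × ℝ => hx p.1 p.2)
    (hcoer : ∀ M > (0:ℝ), ∃ ρ > (0:ℝ), ∀ t x : ℝ, ρ ≤ |x| → h t x / x ≤ -M)
    {w g : ℝ → ℝ} (hw : ∀ t, HasDerivAt w (g t) t) {Cw : ℝ} (hCw : ∀ t, |w t| ≤ Cw)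
    (hsubw : ∀ t, g t ≤ h t (w t)) (t₀ : ℝ) :
    ∃ y : ℝ → ℝ, BddSol h y ∧ w t₀ ≤ y t₀ := by
  obtain ⟨ρ, hρ, hcoρ⟩ := hcoer 1 one_pos
  set K : ℝ := max ρ Cw with hKdef
  have hKρ : ρ ≤ K := le_max_left _ _
  have hKC : Cw ≤ K := le_max_right _ _
  have hK0 : 0 < K := lt_of_lt_of_le hρ hKρ
  have hneg : ∀ t x, K ≤ x → h t x < 0 := by
    intro t x hxK
    have hx0 : 0 < x := lt_of_lt_of_le hK0 hxK
    have h1 := hcoρ t x (by rw [abs_of_pos hx0]; linarith)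
    rw [div_le_iff₀ hx0] at h1
    nlinarith
  have hpos : ∀ t x, x ≤ -K → 0 < h t x := by
    intro t x hxK
    have hx0 : x < 0 := by linarith
    have h1 := hcoρ t x (by rw [abs_of_neg hx0]; linarith)
    rw [div_le_iff_of_neg hx0] at h1
    nlinarith
  have exY : ∀ n : ℕ, ∃ y : ℝ → ℝ, y (t₀ - n) = w (t₀ - n) ∧
      (∀ t ∈ Icc (t₀ - (n:ℝ)) (t₀ + n), HasDerivWithinAt y (h t (y t)) (Icc (t₀ - (n:ℝ)) (t₀ + n)) t) ∧
      ∀ t ∈ Icc (t₀ - (n:ℝ)) (t₀ + n), |y t| ≤ K := by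
    intro n
    exact global_exist hc hd hdc hK0.le hneg hpos
      (by have : (0:ℝ) ≤ n := n.cast_nonneg; linarith) ((hCw _).trans hKC)
  choose Y hY0 hYd hYb using exY
  have hlip : ∀ n : ℕ, ∃ L ≥ (0:ℝ), ∀ t ∈ Icc (t₀ - (n:ℝ)) (t₀ + n), ∀ p ∈ Icc (-K) K,
      ∀ q ∈ Icc (-K) K, q ≤ p → h t p - h t q ≤ L * (p - q) := by
    intro n
    obtain ⟨L₀, hL₀⟩ := ((isCompact_Icc.prod isCompact_Icc) :
      IsCompact (Icc (t₀ - (n:ℝ)) (t₀ + n) ×ˢ Icc (-K) K)).exists_bound_of_continuousOn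
      hdc.continuousOn
    refine ⟨max L₀ 0, le_max_right _ _, ?_⟩
    intro t ht p hp q hq hqp
    have hmv := Convex.norm_image_sub_le_of_norm_hasDerivWithin_le
      (f := h t) (f' := hx t) (s := Icc (-K) K) (C := max L₀ 0)
      (fun z _ => (hd t z).hasDerivWithinAt)
      (fun z hz => (hL₀ (t, z) (Set.mk_mem_prod ht hz)).trans (le_max_left _ _))
      (convex_Icc _ _) hq hp
    rw [Real.norm_eq_abs, Real.norm_eq_abs] at hmv
    calc h t p - h t q ≤ |h t p - h t q| := le_abs_self _
      _ ≤ max L₀ 0 * |p - q| := hmv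
      _ = max L₀ 0 * (p - q) := by rw [abs_of_nonneg (by linarith)]
  choose Lf hLf0 hLf using hlip
  have hwmem : ∀ t, w t ∈ Icc (-K) K := by
    intro t
    have := abs_le.1 (hCw t)
    rw [mem_Icc]; constructor <;> linarith
  have hwle : ∀ n : ℕ, ∀ t ∈ Icc (t₀ - (n:ℝ)) (t₀ + n), w t ≤ Y n t := by
    intro n
    refine comp_le (hLf0 n) (fun t _ => (hw t).hasDerivWithinAt) (hYd n) ?_ (by rw [hY0 n])
    intro t ht hle
    have hym : Y n t ∈ Icc (-K) K := by rw [mem_Icc]; exact abs_le.1 (hYb n t ht)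
    have h2 := hLf n t ht (w t) (hwmem t) (Y n t) hym hle
    linarith [hsubw t]
  have hsubI : ∀ n m : ℕ, n ≤ m →
      Icc (t₀ - (n:ℝ)) (t₀ + n) ⊆ Icc (t₀ - (m:ℝ)) (t₀ + m) := by
    intro n m hnm
    have : (n:ℝ) ≤ m := by exact_mod_cast hnm
    exact Icc_subset_Icc (by linarith) (by linarith)
  have hmono : ∀ n m : ℕ, n ≤ m → ∀ t ∈ Icc (t₀ - (n:ℝ)) (t₀ + n), Y n t ≤ Y m t := by
    intro n m hnm
    refine comp_le (hLf0 n) (hYd n)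
      (fun t ht => (hYd m t (hsubI n m hnm ht)).mono (hsubI n m hnm)) ?_ ?_
    · intro t ht hle
      have hpm : Y n t ∈ Icc (-K) K := by rw [mem_Icc]; exact abs_le.1 (hYb n t ht)
      have hqm : Y m t ∈ Icc (-K) K := by
        rw [mem_Icc]; exact abs_le.1 (hYb m t (hsubI n m hnm ht))
      have h2 := hLf n t ht (Y n t) hpm (Y m t) hqm hle
      linarith
    · rw [hY0 n]
      have hmem : t₀ - (n:ℝ) ∈ Icc (t₀ - (n:ℝ)) (t₀ + n) :=
        ⟨le_rfl, by have : (0:ℝ) ≤ n := n.cast_nonneg; linarith⟩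
      exact hwle m (t₀ - n) (hsubI n m hnm hmem)
  set Z : ℕ → ℝ → ℝ := fun n t => if t ∈ Icc (t₀ - (n:ℝ)) (t₀ + n) then Y n t else -K with hZ
  have hZle : ∀ n t, Z n t ≤ K := by
    intro n t
    by_cases hin : t ∈ Icc (t₀ - (n:ℝ)) (t₀ + n)
    · rw [hZ]; simp only [if_pos hin]; exact (abs_le.1 (hYb n t hin)).2
    · rw [hZ]; simp only [if_neg hin]; linarith
  have hZge : ∀ n t, -K ≤ Z n t := by
    intro n t
    by_cases hin : t ∈ Icc (t₀ - (n:ℝ)) (t₀ + n)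
    · rw [hZ]; simp only [if_pos hin]; exact (abs_le.1 (hYb n t hin)).1
    · rw [hZ]; simp only [if_neg hin]; exact le_rfl
  have hZmono : ∀ t, Monotone fun n => Z n t := by
    intro t
    intro n m hnm
    simp only
    by_cases hin : t ∈ Icc (t₀ - (n:ℝ)) (t₀ + n)
    · have hin' : t ∈ Icc (t₀ - (m:ℝ)) (t₀ + m) := hsubI n m hnm hin
      rw [hZ]
      simp only [if_pos hin, if_pos hin']
      exact hmono n m hnm t hin
    · calc Z n t = -K := by rw [hZ]; simp only [if_neg hin]
        _ ≤ Z m t := hZge m t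
  set y : ℝ → ℝ := fun t => ⨆ n, Z n t with hydef
  have hbddA : ∀ t, BddAbove (range fun n => Z n t) := by
    intro t
    refine ⟨K, ?_⟩
    rintro _ ⟨n, rfl⟩
    exact hZle n t
  have htendZ : ∀ t, Tendsto (fun n => Z n t) atTop (𝓝 (y t)) :=
    fun t => tendsto_atTop_ciSup (hZmono t) (hbddA t)
  have hev : ∀ t : ℝ, ∀ᶠ n : ℕ in atTop, t ∈ Icc (t₀ - (n:ℝ)) (t₀ + n) := by
    intro t
    filter_upwards [eventually_ge_atTop ⌈|t - t₀|⌉₊] with n hn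
    have h1 : |t - t₀| ≤ (n:ℝ) := (Nat.le_ceil _).trans (by exact_mod_cast hn)
    rw [abs_le] at h1
    rw [mem_Icc]; constructor <;> linarith [h1.1, h1.2]
  have htendY : ∀ t, Tendsto (fun n => Y n t) atTop (𝓝 (y t)) := by
    intro t
    refine (htendZ t).congr' ?_
    filter_upwards [hev t] with n hn
    rw [hZ]; simp only [if_pos hn]
  have hybd : ∀ t, |y t| ≤ K := by
    intro t
    rw [abs_le]
    constructor
    · exact le_trans (hZge 0 t) (le_ciSup (hbddA t) 0)
    · exact ciSup_le (fun n => hZle n t)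
  have hwy : w t₀ ≤ y t₀ := by
    have ht0 : t₀ ∈ Icc (t₀ - ((0:ℕ):ℝ)) (t₀ + ((0:ℕ):ℝ)) := by
      simp
    have h1 : w t₀ ≤ Z 0 t₀ := by
      rw [hZ]
      simp only [if_pos ht0]
      exact hwle 0 t₀ ht0
    exact h1.trans (le_ciSup (hbddA t₀) 0)
  -- uniform bound for h along the solutions, on compact time intervals
  have hbC : ∀ m : ℕ, ∃ B ≥ (0:ℝ), ∀ t ∈ Icc (t₀ - (m:ℝ)) (t₀ + m), ∀ z ∈ Icc (-K) K,
      |h t z| ≤ B := by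
    intro m
    obtain ⟨B₀, hB₀⟩ := ((isCompact_Icc.prod isCompact_Icc) :
      IsCompact (Icc (t₀ - (m:ℝ)) (t₀ + m) ×ˢ Icc (-K) K)).exists_bound_of_continuousOn
      hc.continuousOn
    refine ⟨max B₀ 0, le_max_right _ _, fun t ht z hz => ?_⟩
    exact (hB₀ (t, z) (Set.mk_mem_prod ht hz)).trans (le_max_left _ _)
  choose bC hbC0 hbCb using hbC
  have hYlip : ∀ m n : ℕ, m ≤ n → ∀ p ∈ Icc (t₀ - (m:ℝ)) (t₀ + m),
      ∀ q ∈ Icc (t₀ - (m:ℝ)) (t₀ + m), |Y n q - Y n p| ≤ bC m * |q - p| := by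
    intro m n hmn p hp q hq
    have hmv := Convex.norm_image_sub_le_of_norm_hasDerivWithin_le
      (f := Y n) (f' := fun r => h r (Y n r)) (s := Icc (t₀ - (m:ℝ)) (t₀ + m)) (C := bC m)
      (fun r hr => (hYd n r (hsubI m n hmn hr)).mono (hsubI m n hmn))
      (fun r hr => by
        rw [Real.norm_eq_abs]
        exact hbCb m r hr (Y n r) (by rw [mem_Icc]; exact abs_le.1 (hYb n r (hsubI m n hmn hr))))
      (convex_Icc _ _) hp hq
    rw [Real.norm_eq_abs, Real.norm_eq_abs] at hmv
    exact hmv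
  have hylip : ∀ m : ℕ, ∀ p ∈ Icc (t₀ - (m:ℝ)) (t₀ + m), ∀ q ∈ Icc (t₀ - (m:ℝ)) (t₀ + m),
      |y q - y p| ≤ bC m * |q - p| := by
    intro m p hp q hq
    have htt : Tendsto (fun n => |Y n q - Y n p|) atTop (𝓝 (|y q - y p|)) :=
      ((htendY q).sub (htendY p)).abs
    refine le_of_tendsto htt ?_
    filter_upwards [eventually_ge_atTop m] with n hn
    exact hYlip m n hn p hp q hq
  have hycont : Continuous y := by
    rw [continuous_iff_continuousAt]
    intro τ
    obtain ⟨m, hm⟩ := exists_nat_gt |τ - t₀|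
    rw [abs_sub_lt_iff] at hm
    have hτm : τ ∈ Ioo (t₀ - (m:ℝ)) (t₀ + m) := ⟨by linarith [hm.1, hm.2], by linarith [hm.1, hm.2]⟩
    have hcO : ContinuousOn y (Icc (t₀ - (m:ℝ)) (t₀ + m)) := by
      apply LipschitzOnWith.continuousOn (K := Real.toNNReal (bC m))
      apply LipschitzOnWith.of_dist_le_mul
      intro p hp q hq
      rw [Real.dist_eq, Real.dist_eq, Real.coe_toNNReal _ (hbC0 m)]
      exact hylip m q hq p hp
    exact hcO.continuousAt (Icc_mem_nhds hτm.1 hτm.2)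
  set G : ℝ → ℝ := fun s => h s (y s) with hG
  have hGcont : Continuous G := hc.comp (continuous_id.prodMk hycont)
  have hkey : ∀ τ : ℝ, HasDerivAt y (G τ) τ := by
    intro τ
    obtain ⟨m, hm⟩ := exists_nat_gt |τ - t₀|
    rw [abs_sub_lt_iff] at hm
    set c : ℝ := t₀ - m with hcdef
    set d : ℝ := t₀ + m with hddef
    have hτm : τ ∈ Ioo c d := ⟨by rw [hcdef]; linarith [hm.1, hm.2], by rw [hddef]; linarith [hm.1, hm.2]⟩
    have hcd : c ≤ d := hτm.1.le.trans hτm.2.le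
    have hid : ∀ t ∈ Icc c d, y t = y c + ∫ s in c..t, G s := by
      intro t ht
      have hcmem : c ∈ Icc c d := ⟨le_rfl, hcd⟩
      have hYid : ∀ n : ℕ, m + 1 ≤ n → Y n t - Y n c = ∫ s in c..t, h s (Y n s) := by
        intro n hn
        have hcast : (m:ℝ) + 1 ≤ n := by exact_mod_cast hn
        have hsubn : Icc c d ⊆ Icc (t₀ - (n:ℝ)) (t₀ + n) :=
          Icc_subset_Icc (by rw [hcdef]; linarith) (by rw [hddef]; linarith)
        have hsubt : Icc c t ⊆ Icc c d := Icc_subset_Icc le_rfl ht.2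
        have hcont : ContinuousOn (Y n) (Icc c t) := fun r hr =>
          ((hYd n r (hsubn (hsubt hr))).mono (hsubt.trans hsubn)).continuousWithinAt
        have hder : ∀ r ∈ Ioo c t, HasDerivWithinAt (Y n) (h r (Y n r)) (Ioi r) r := by
          intro r hr
          have hrn : r ∈ Icc (t₀ - (n:ℝ)) (t₀ + n) := hsubn (hsubt ⟨hr.1.le, hr.2.le⟩)
          have hnb : Icc (t₀ - (n:ℝ)) (t₀ + n) ∈ 𝓝 r := by
            apply Icc_mem_nhds
            · have : c ≤ r := hr.1.le
              rw [hcdef] at this; linarith [hr.1]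
            · have : r < t := hr.2
              have h2 : t ≤ d := ht.2
              rw [hddef] at h2; linarith
          exact ((hYd n r hrn).hasDerivAt hnb).hasDerivWithinAt
        have hintc : ContinuousOn (fun s => h s (Y n s)) (Icc c t) :=
          hc.comp_continuousOn (continuousOn_id.prodMk hcont)
        have hint : IntervalIntegrable (fun s => h s (Y n s)) volume c t :=
          hintc.intervalIntegrable_of_Icc ht.1
        exact (intervalIntegral.integral_eq_sub_of_hasDeriv_right_of_le ht.1 hcont hder hint).symm
      have hDCT : Tendsto (fun n => ∫ s in c..t, h s (Y n s)) atTop (𝓝 (∫ s in c..t, G s)) := by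
        apply intervalIntegral.tendsto_integral_filter_of_dominated_convergence
          (bound := fun _ => bC m)
        · filter_upwards [eventually_ge_atTop (m + 1)] with n hn
          have hcast : (m:ℝ) + 1 ≤ n := by exact_mod_cast hn
          have hsubn : Icc c d ⊆ Icc (t₀ - (n:ℝ)) (t₀ + n) :=
            Icc_subset_Icc (by rw [hcdef]; linarith) (by rw [hddef]; linarith)
          have hsubt : Icc c t ⊆ Icc c d := Icc_subset_Icc le_rfl ht.2
          have hcont : ContinuousOn (Y n) (Icc c t) := fun r hr =>
            ((hYd n r (hsubn (hsubt hr))).mono (hsubt.trans hsubn)).continuousWithinAt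
          have hIsub : Set.uIoc c t ⊆ Icc c t := by
            rw [uIoc_of_le ht.1]
            exact Ioc_subset_Icc_self
          exact ((hc.comp_continuousOn (continuousOn_id.prodMk hcont)).mono hIsub).aestronglyMeasurable
            measurableSet_uIoc
        · filter_upwards [eventually_ge_atTop (m + 1)] with n hn
          apply ae_of_all
          intro s hs
          have hcast : (m:ℝ) + 1 ≤ n := by exact_mod_cast hn
          have hsI : s ∈ Icc c d := by
            rw [uIoc_of_le ht.1] at hs
            exact ⟨hs.1.le, hs.2.trans ht.2⟩
          have hsn : s ∈ Icc (t₀ - (n:ℝ)) (t₀ + n) :=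
            Icc_subset_Icc (by rw [hcdef]; linarith) (by rw [hddef]; linarith) hsI
          rw [Real.norm_eq_abs]
          exact hbCb m s hsI (Y n s) (by rw [mem_Icc]; exact abs_le.1 (hYb n s hsn))
        · exact intervalIntegrable_const
        · apply ae_of_all
          intro s _
          have hcs : Continuous (fun z : ℝ => h s z) := hc.comp (Continuous.prodMk_right s)
          exact (hcs.tendsto (y s)).comp (htendY s)
      have hLHS : Tendsto (fun n => Y n t - Y n c) atTop (𝓝 (y t - y c)) :=
        (htendY t).sub (htendY c)
      have hfin := tendsto_nhds_unique
        (hLHS.congr' (by filter_upwards [eventually_ge_atTop (m + 1)] with n hn; exact hYid n hn))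
        hDCT
      linarith
    have hF : HasDerivAt (fun u => y c + ∫ s in c..u, G s) (G τ) τ := by
      apply HasDerivAt.const_add
      exact intervalIntegral.integral_hasDerivAt_right (hGcont.intervalIntegrable _ _)
        (hGcont.stronglyMeasurableAtFilter _ _) hGcont.continuousAt
    refine HasDerivAt.congr_of_eventuallyEq hF ?_
    filter_upwards [Icc_mem_nhds hτm.1 hτm.2] with u hu
    exact hid u hu
  exact ⟨y, ⟨hkey, K, hybd⟩, hwy⟩


theorem stmt4 (h₁ h₂ : ℝ → ℝ → ℝ) (hx₁ hx₂ : ℝ → ℝ → ℝ)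
    (hc₁ : Continuous fun p : ℝ × ℝ => h₁ p.1 p.2)
    (hc₂ : Continuous fun p : ℝ × ℝ => h₂ p.1 p.2)
    (hd₁ : ∀ t x, HasDerivAt (h₁ t) (hx₁ t x) x)
    (hd₂ : ∀ t x, HasDerivAt (h₂ t) (hx₂ t x) x)
    (hdc₁ : Continuous fun p : ℝ × ℝ => hx₁ p.1 p.2)
    (hdc₂ : Continuous fun p : ℝ × ℝ => hx₂ p.1 p.2)
    (hcoer₁ : ∀ M > (0:ℝ), ∃ ρ > (0:ℝ), ∀ t x : ℝ, ρ ≤ |x| → h₁ t x / x ≤ -M)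
    (hcoer₂ : ∀ M > (0:ℝ), ∃ ρ > (0:ℝ), ∀ t x : ℝ, ρ ≤ |x| → h₂ t x / x ≤ -M)
    (hle : ∀ t x, h₁ t x ≤ h₂ t x)
    (l₁ u₁ l₂ u₂ : ℝ → ℝ)
    (hl₁ : BddSol h₁ l₁) (hu₁ : BddSol h₁ u₁)
    (hl₂ : BddSol h₂ l₂) (hu₂ : BddSol h₂ u₂)
    (hext₁ : ∀ x : ℝ → ℝ, BddSol h₁ x → ∀ t, l₁ t ≤ x t ∧ x t ≤ u₁ t)
    (hext₂ : ∀ x : ℝ → ℝ, BddSol h₂ x → ∀ t, l₂ t ≤ x t ∧ x t ≤ u₂ t) :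
    ∀ t, l₁ t ≤ l₂ t ∧ u₁ t ≤ u₂ t := by
  intro t
  constructor
  · -- l₁ t ≤ l₂ t, via the reflected system x ↦ -x applied to h₁
    obtain ⟨C₂, hC₂⟩ := hl₂.2
    have hdref : ∀ s x : ℝ, HasDerivAt (fun z : ℝ => -h₁ s (-z)) (hx₁ s (-x)) x := by
      intro s x
      have h1 : HasDerivAt (fun z : ℝ => -z) (-1) x := (hasDerivAt_id x).neg
      have h2 : HasDerivAt ((h₁ s) ∘ fun z : ℝ => -z) (hx₁ s (-x) * (-1)) x :=
        (hd₁ s (-x)).comp x h1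
      have h3 := h2.neg
      have e : hx₁ s (-x) = -(hx₁ s (-x) * -1) := by ring
      rw [e]; exact h3
    have hcref : Continuous fun p : ℝ × ℝ => -h₁ p.1 (-p.2) :=
      (hc₁.comp (continuous_fst.prodMk continuous_snd.neg)).neg
    have hdcref : Continuous fun p : ℝ × ℝ => hx₁ p.1 (-p.2) :=
      hdc₁.comp (continuous_fst.prodMk continuous_snd.neg)
    have hcoerref : ∀ M > (0:ℝ), ∃ ρ > (0:ℝ), ∀ s x : ℝ, ρ ≤ |x| → (-h₁ s (-x)) / x ≤ -M := by
      intro M hM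
      obtain ⟨ρ, hρ, hco⟩ := hcoer₁ M hM
      refine ⟨ρ, hρ, fun s x hxρ => ?_⟩
      have h2 := hco s (-x) (by rwa [abs_neg])
      rw [div_neg] at h2
      rw [neg_div]
      exact h2
    obtain ⟨y, hy, hy0⟩ := key_lemma (h := fun s z => -h₁ s (-z)) (hx := fun s z => hx₁ s (-z))
      hcref hdref hdcref hcoerref
      (w := fun s => -l₂ s) (g := fun s => -h₂ s (l₂ s))
      (fun s => (hl₂.1 s).neg) (Cw := C₂) (fun s => by rw [abs_neg]; exact hC₂ s)
      (fun s => by simp only [neg_neg]; exact neg_le_neg (hle s (l₂ s))) t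
    obtain ⟨Cy, hCy⟩ := hy.2
    have hz : BddSol h₁ (fun s => -y s) := by
      refine ⟨fun s => ?_, Cy, fun s => by rw [abs_neg]; exact hCy s⟩
      have := (hy.1 s).neg
      simp only [neg_neg] at this; exact this
    have h1 := (hext₁ (fun s => -y s) hz t).1
    linarith
  · -- u₁ t ≤ u₂ t
    obtain ⟨C₁, hC₁⟩ := hu₁.2
    obtain ⟨y, hy, hy0⟩ := key_lemma hc₂ hd₂ hdc₂ hcoer₂
      (w := u₁) (g := fun s => h₁ s (u₁ s)) hu₁.1 (Cw := C₁) hC₁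
      (fun s => hle s (u₁ s)) t
    have h1 := (hext₂ y hy t).2
    linarith
end

section
/- Let h : ℝ × ℝ → ℝ be continuous with continuous partial derivative h_x, and let x̃ : ℝ → ℝ be a bounded solution of x' = h(t,x). Suppose x̄ is another solution defined on a negative half-line with lim_{t→-∞}(x̄(t) - x̃(t)) = 0, and suppose x̃ is attractive hyperbolic in the uniform exponential sense: there exist k ≥ 1, β > 0, ρ > 0 such that |x̃(t) - x(t,s,x₀)| ≤ k·e^{-β(t-s)}·|x̃(s) - x₀| whenever |x̃(s) - x₀| ≤ ρ and t ≥ s. Then x̄ = x̃ on their common domain. -/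
open Filter

theorem stmt14 (h : ℝ → ℝ → ℝ) (hx' : ℝ → ℝ → ℝ)
    (hc : Continuous fun p : ℝ × ℝ => h p.1 p.2)
    (hd : ∀ t x, HasDerivAt (h t) (hx' t x) x)
    (hdc : Continuous fun p : ℝ × ℝ => hx' p.1 p.2)
    (xtil : ℝ → ℝ) (hsolt : ∀ t, HasDerivAt xtil (h t (xtil t)) t)
    (hbddt : ∃ C, ∀ t, |xtil t| ≤ C)
    (k β ρ : ℝ) (hk : 1 ≤ k) (hβ : 0 < β) (hρ : 0 < ρ)
    (hhyp : ∀ (y : ℝ → ℝ) (s t : ℝ), s ≤ t →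
      (∀ r ∈ Set.Icc s t, HasDerivAt y (h r (y r)) r) →
      |xtil s - y s| ≤ ρ →
      |xtil t - y t| ≤ k * Real.exp (-β * (t - s)) * |xtil s - y s|)
    (b : ℝ) (xbar : ℝ → ℝ) (hsolb : ∀ t < b, HasDerivAt xbar (h t (xbar t)) t)
    (hlim : Tendsto (fun t => xbar t - xtil t) atBot (nhds 0)) :
    ∀ t < b, xbar t = xtil t := by
  intro t ht
  have hk0 : (0:ℝ) < k := lt_of_lt_of_le one_pos hk
  have key : ∀ ε > (0:ℝ), |xtil t - xbar t| ≤ ε := by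
    intro ε hε
    have hδ : 0 < min ρ (ε / k) := lt_min hρ (div_pos hε hk0)
    have hev := Metric.tendsto_nhds.mp hlim (min ρ (ε / k)) hδ
    obtain ⟨s, hds, hst⟩ := (hev.and (eventually_le_atBot t)).exists
    rw [Real.dist_eq, sub_zero] at hds
    have habs : |xtil s - xbar s| < min ρ (ε / k) := by
      rwa [abs_sub_comm] at hds
    have hsol : ∀ r ∈ Set.Icc s t, HasDerivAt xbar (h r (xbar r)) r :=
      fun r hr => hsolb r (lt_of_le_of_lt hr.2 ht)
    have hb := hhyp xbar s t hst hsol (le_of_lt (lt_of_lt_of_le habs (min_le_left _ _)))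
    have hexp : Real.exp (-β * (t - s)) ≤ 1 := by
      rw [Real.exp_le_one_iff]
      nlinarith
    have hd2 : |xtil s - xbar s| ≤ ε / k :=
      le_of_lt (lt_of_lt_of_le habs (min_le_right _ _))
    calc |xtil t - xbar t| ≤ k * Real.exp (-β * (t - s)) * |xtil s - xbar s| := hb
      _ ≤ k * 1 * (ε / k) := by
          apply mul_le_mul
          · exact mul_le_mul_of_nonneg_left hexp (le_of_lt hk0)
          · exact hd2
          · exact abs_nonneg _
          · positivity
      _ = ε := by field_simp
  have : |xtil t - xbar t| ≤ 0 := le_of_forall_pos_le_add (by simpa using key)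
  have := abs_nonpos_iff.mp this
  linarith [sub_eq_zero.mp this]
end

section
/- Let f : ℝ × ℝ → ℝ be continuous, C¹ in x, and let m : [a,b] → ℝ be a solution of x' = F(t,x) on [a,b] with |m(b)| ≤ k. Suppose F(t,x) > 2k/(b-a) for all (t,x) ∈ [a,b] × [-k,k]. Then m(a) < -k. -/
open Set

/-- If `m` has derivative `d` at `t` and `m s ≤ m t` on `[t, t0]` with `t < t0`,
then `d ≤ 0`. -/
lemma aux_right_max_deriv_nonpos {m : ℝ → ℝ} {d t t0 : ℝ} (ht : t < t0)
    (hder : HasDerivAt m d t) (h : ∀ s ∈ Set.Icc t t0, m s ≤ m t) : d ≤ 0 := by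
  have hmax : IsLocalMaxOn m (Set.Icc t t0) t := (isMaxOn_iff.mpr h).localize
  have hy : t0 - t ∈ posTangentConeAt (Set.Icc t t0) t :=
    sub_mem_posTangentConeAt_of_segment_subset (by rw [segment_eq_Icc ht.le])
  have h2 := hmax.hasFDerivWithinAt_nonpos hder.hasFDerivAt.hasFDerivWithinAt hy
  simp only [ContinuousLinearMap.smulRight_apply, ContinuousLinearMap.one_apply,
    ContinuousLinearMap.toSpanSingleton_apply, smul_eq_mul] at h2
  nlinarith

/-- If `m` has derivative `d` at `t` and `m t ≤ m s` on `[s0, t]` with `s0 < t`,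
then `d ≤ 0`. -/
lemma aux_left_min_deriv_nonpos {m : ℝ → ℝ} {d t s0 : ℝ} (ht : s0 < t)
    (hder : HasDerivAt m d t) (h : ∀ s ∈ Set.Icc s0 t, m t ≤ m s) : d ≤ 0 := by
  have hmin : IsLocalMinOn m (Set.Icc s0 t) t := (isMinOn_iff.mpr (fun s hs => h s hs)).localize
  have hy : s0 - t ∈ posTangentConeAt (Set.Icc s0 t) t :=
    sub_mem_posTangentConeAt_of_segment_subset
      (by rw [segment_symm, segment_eq_Icc ht.le])
  have h2 := hmin.hasFDerivWithinAt_nonneg hder.hasFDerivAt.hasFDerivWithinAt hy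
  simp only [ContinuousLinearMap.smulRight_apply, ContinuousLinearMap.one_apply,
    ContinuousLinearMap.toSpanSingleton_apply, smul_eq_mul] at h2
  nlinarith

theorem stmt16 (F : ℝ → ℝ → ℝ) (Fx : ℝ → ℝ → ℝ)
    (hc : Continuous fun p : ℝ × ℝ => F p.1 p.2)
    (hd : ∀ t x, HasDerivAt (F t) (Fx t x) x)
    (hdc : Continuous fun p : ℝ × ℝ => Fx p.1 p.2)
    (a b k : ℝ) (hab : a < b) (hk : 0 < k)
    (m : ℝ → ℝ) (hm : ∀ t ∈ Set.Icc a b, HasDerivAt m (F t (m t)) t)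
    (hmb : |m b| ≤ k)
    (hF : ∀ t ∈ Set.Icc a b, ∀ x ∈ Set.Icc (-k) k, 2 * k / (b - a) < F t x) :
    m a < -k := by
  by_contra hcon
  push_neg at hcon
  have hba : (0:ℝ) < b - a := by linarith
  have hcpos : 0 < 2 * k / (b - a) := by positivity
  obtain ⟨hmb1, hmb2⟩ := abs_le.mp hmb
  have hmcont : ContinuousOn m (Set.Icc a b) :=
    fun t ht => (hm t ht).continuousAt.continuousWithinAt
  -- Step 1: m t ≥ -k on [a,b]
  have hlow : ∀ t ∈ Set.Icc a b, -k ≤ m t := by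
    by_contra hx
    push_neg at hx
    obtain ⟨t0, ht0, ht0'⟩ := hx
    set S : Set ℝ := {t | t ∈ Set.Icc a t0 ∧ -k ≤ m t} with hS
    have hSsub : S ⊆ Set.Icc a b := fun s hs =>
      ⟨hs.1.1, le_trans hs.1.2 ht0.2⟩
    have hSclosed : IsClosed S := by
      have : S = Set.Icc a t0 ∩ m ⁻¹' Set.Ici (-k) := by
        rfl
      rw [this]
      exact (hmcont.mono (Set.Icc_subset_Icc le_rfl ht0.2)).preimage_isClosed_of_isClosed
        isClosed_Icc isClosed_Ici
    have haS : a ∈ S := ⟨⟨le_rfl, ht0.1⟩, hcon⟩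
    have hbdd : BddAbove S := ⟨t0, fun s hs => hs.1.2⟩
    set t1 := sSup S with ht1def
    have ht1S : t1 ∈ S := hSclosed.csSup_mem ⟨a, haS⟩ hbdd
    have ht1b : t1 ∈ Set.Icc a b := hSsub ht1S
    have ht1lt : t1 < t0 := lt_of_le_of_ne ht1S.1.2 (by
      intro h; rw [h] at ht1S; linarith [ht1S.2])
    have hnotS : ∀ s, t1 < s → s ≤ t0 → m s < -k := by
      intro s hs1 hs2
      by_contra hms
      push_neg at hms
      have : s ∈ S := ⟨⟨le_trans ht1S.1.1 hs1.le, hs2⟩, hms⟩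
      exact absurd (le_csSup hbdd this) (not_le.mpr hs1)
    -- m t1 = -k
    have hmt1 : m t1 = -k := by
      refine le_antisymm ?_ ht1S.2
      have hlim : Filter.Tendsto m (nhdsWithin t1 (Set.Ioi t1)) (nhds (m t1)) :=
        ((hm t1 ht1b).continuousAt.continuousWithinAt)
      have hev : ∀ᶠ s in nhdsWithin t1 (Set.Ioi t1), m s ≤ -k := by
        filter_upwards [Ioc_mem_nhdsGT_of_mem ⟨le_rfl, ht1lt⟩] with s hs
        exact (hnotS s hs.1 hs.2).le
      exact le_of_tendsto hlim hev
    -- derivative at t1 is positive but right max gives ≤ 0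
    have hderiv := hm t1 ht1b
    have hpos : 0 < F t1 (m t1) := by
      have := hF t1 ht1b (m t1) (by rw [hmt1]; constructor <;> linarith)
      linarith
    have hnonpos : F t1 (m t1) ≤ 0 := by
      refine aux_right_max_deriv_nonpos ht1lt hderiv ?_
      intro s hs
      rcases eq_or_lt_of_le hs.1 with h | h
      · rw [← h]
      · rw [hmt1]; exact (hnotS s h hs.2).le
    linarith
  -- Step 2: m t ≤ k on [a,b]
  have hup : ∀ t ∈ Set.Icc a b, m t ≤ k := by
    by_contra hx
    push_neg at hx
    obtain ⟨t0, ht0, ht0'⟩ := hx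
    set S : Set ℝ := {t | t ∈ Set.Icc t0 b ∧ m t ≤ k} with hS
    have hSsub : S ⊆ Set.Icc a b := fun s hs =>
      ⟨le_trans ht0.1 hs.1.1, hs.1.2⟩
    have hSclosed : IsClosed S := by
      have : S = Set.Icc t0 b ∩ m ⁻¹' Set.Iic k := by
        rfl
      rw [this]
      exact (hmcont.mono (Set.Icc_subset_Icc ht0.1 le_rfl)).preimage_isClosed_of_isClosed
        isClosed_Icc isClosed_Iic
    have hbS : b ∈ S := ⟨⟨ht0.2, le_rfl⟩, hmb2⟩
    have hbdd : BddBelow S := ⟨t0, fun s hs => hs.1.1⟩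
    set t2 := sInf S with ht2def
    have ht2S : t2 ∈ S := hSclosed.csInf_mem ⟨b, hbS⟩ hbdd
    have ht2b : t2 ∈ Set.Icc a b := hSsub ht2S
    have ht2gt : t0 < t2 := lt_of_le_of_ne ht2S.1.1 (by
      intro h; rw [← h] at ht2S; linarith [ht2S.2])
    have hnotS : ∀ s, t0 ≤ s → s < t2 → k < m s := by
      intro s hs1 hs2
      by_contra hms
      push_neg at hms
      have : s ∈ S := ⟨⟨hs1, le_trans hs2.le ht2S.1.2⟩, hms⟩
      exact absurd (csInf_le hbdd this) (not_le.mpr hs2)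
    have hmt2 : m t2 = k := by
      refine le_antisymm ht2S.2 ?_
      have hlim : Filter.Tendsto m (nhdsWithin t2 (Set.Iio t2)) (nhds (m t2)) :=
        ((hm t2 ht2b).continuousAt.continuousWithinAt)
      have hev : ∀ᶠ s in nhdsWithin t2 (Set.Iio t2), k ≤ m s := by
        filter_upwards [Ico_mem_nhdsLT_of_mem ⟨ht2gt, le_rfl⟩] with s hs
        exact (hnotS s hs.1 hs.2).le
      exact ge_of_tendsto hlim hev
    have hderiv := hm t2 ht2b
    have hpos : 0 < F t2 (m t2) := by
      have := hF t2 ht2b (m t2) (by rw [hmt2]; constructor <;> linarith)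
      linarith
    have hnonpos : F t2 (m t2) ≤ 0 := by
      refine aux_left_min_deriv_nonpos ht2gt hderiv ?_
      intro s hs
      rcases eq_or_lt_of_le hs.2 with h | h
      · rw [h]
      · rw [hmt2]; exact (hnotS s hs.1 h).le
    linarith
  -- Step 3: MVT
  obtain ⟨x, hx, hslope⟩ := exists_hasDerivAt_eq_slope m (fun t => F t (m t)) hab
    hmcont (fun t ht => hm t ⟨ht.1.le, ht.2.le⟩)
  have hxIcc : x ∈ Set.Icc a b := ⟨hx.1.le, hx.2.le⟩
  have hFx : 2 * k / (b - a) < F x (m x) :=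
    hF x hxIcc (m x) ⟨hlow x hxIcc, hup x hxIcc⟩
  rw [hslope] at hFx
  rw [div_lt_div_iff₀ hba hba] at hFx
  nlinarith
end

section
/- Let a : ℝ → ℝ be continuous with exp(∫_s^t a(r)dr) ≤ k e^{-β(t-s)} for all t ≥ s (k ≥ 1, β > 0), let u(t) = exp(∫_0^t a(r)dr), and let r : ℝ → ℝ be continuous and bounded with sup|r| ≤ M. Then the function y(t) = ∫_{-∞}^t u(t)u(s)^{-1} r(s) ds is well-defined, is a bounded solution of y' = a(t)y + r(t) with sup_{t∈ℝ}|y(t)| ≤ kM/β, and it is the unique bounded solution of this equation on ℝ. -/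
open MeasureTheory Set

/-- `u(t) = exp(∫_0^t a)`. -/
noncomputable def usol (a : ℝ → ℝ) (t : ℝ) : ℝ :=
  Real.exp (∫ x in (0:ℝ)..t, a x)

/-- `y(t) = ∫_{-∞}^t u(t) u(s)⁻¹ r(s) ds`. -/
noncomputable def ysol (a r : ℝ → ℝ) (t : ℝ) : ℝ :=
  ∫ s in Iic t, usol a t / usol a s * r s

theorem stmt18 (a : ℝ → ℝ) (ha : Continuous a) (k β : ℝ) (hk : 1 ≤ k) (hβ : 0 < β)
    (hdich : ∀ s t : ℝ, s ≤ t →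
      Real.exp (∫ x in s..t, a x) ≤ k * Real.exp (-β * (t - s)))
    (r : ℝ → ℝ) (hr : Continuous r) (M : ℝ) (hM : ∀ t, |r t| ≤ M) :
    (∀ t : ℝ, IntegrableOn (fun s => usol a t / usol a s * r s) (Iic t)) ∧
    (∀ t : ℝ, HasDerivAt (ysol a r) (a t * ysol a r t + r t) t) ∧
    (∀ t : ℝ, |ysol a r t| ≤ k * M / β) ∧
    (∀ z : ℝ → ℝ, (∀ t, HasDerivAt z (a t * z t + r t) t) →
      (∃ C, ∀ t, |z t| ≤ C) → ∀ t, z t = ysol a r t) := by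
  have hk0 : (0:ℝ) < k := lt_of_lt_of_le one_pos hk
  have hM0 : 0 ≤ M := le_trans (abs_nonneg _) (hM 0)
  have hupos : ∀ t, 0 < usol a t := fun t => Real.exp_pos _
  have hu0 : usol a 0 = 1 := by simp [usol]
  have hii : ∀ s t : ℝ, IntervalIntegrable a volume s t :=
    fun s t => ha.intervalIntegrable s t
  have hudiv : ∀ s t : ℝ, usol a t / usol a s = Real.exp (∫ x in s..t, a x) := by
    intro s t
    rw [usol, usol, ← Real.exp_sub]
    congr 1
    rw [← intervalIntegral.integral_add_adjacent_intervals (hii 0 s) (hii s t)]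
    ring
  have hbnd : ∀ s t : ℝ, s ≤ t → usol a t / usol a s ≤ k * Real.exp (-β * (t - s)) := by
    intro s t hst; rw [hudiv]; exact hdich s t hst
  -- derivative and continuity of u
  have hu' : ∀ t, HasDerivAt (usol a) (a t * usol a t) t := by
    intro t
    have h1 : HasDerivAt (fun u => ∫ x in (0:ℝ)..u, a x) (a t) t :=
      intervalIntegral.integral_hasDerivAt_right (hii 0 t)
        (ha.stronglyMeasurableAtFilter _ _) ha.continuousAt
    have := h1.exp
    unfold usol; simpa [mul_comm] using this
  have hucont : Continuous (usol a) :=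
    continuous_iff_continuousAt.2 fun t => (hu' t).continuousAt
  -- integrability of exp (β * s) on Iic t
  have hexpint : ∀ t : ℝ, IntegrableOn (fun s => Real.exp (β * s)) (Iic t) := by
    intro t
    have h1 : IntegrableOn (fun x => Real.exp (-β * x)) (Ici (-t)) :=
      (integrableOn_Ici_iff_integrableOn_Ioi enorm_ne_top).mpr (exp_neg_integrableOn_Ioi (-t) hβ)
    have A : MeasurableEmbedding fun x : ℝ => -x :=
      (Homeomorph.neg ℝ).isClosedEmbedding.measurableEmbedding
    have : IntegrableOn (fun s => Real.exp (β * s)) (Iic t) (Measure.map (fun x : ℝ => -x) volume) := by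
      rw [A.integrableOn_map_iff]
      simpa [Function.comp_def, neg_Iic, mul_comm] using h1
    rwa [Measure.map_neg_eq_self (volume : Measure ℝ)] at this
  have hexpval : ∀ t : ℝ, ∫ s in Iic t, Real.exp (β * s) = Real.exp (β * t) / β := by
    intro t
    have hderiv : ∀ x ∈ Iic t, HasDerivAt (fun s => Real.exp (β * s) / β) (Real.exp (β * x)) x := by
      intro x _
      have h1 : HasDerivAt (fun s : ℝ => β * s) β x := by
        simpa using (hasDerivAt_id x).const_mul β
      have := h1.exp.div_const β
      simpa [mul_div_assoc, mul_div_cancel_right₀, hβ.ne'] using this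
    have htend : Filter.Tendsto (fun s => Real.exp (β * s) / β) Filter.atBot (nhds 0) := by
      have h1 : Filter.Tendsto (fun s : ℝ => β * s) Filter.atBot Filter.atBot :=
        Filter.tendsto_id.const_mul_atBot hβ
      have := (Real.tendsto_exp_atBot.comp h1).div_const β
      simpa using this
    have := integral_Iic_of_hasDerivAt_of_tendsto' hderiv (hexpint t) htend
    simpa using this
  -- integrability
  have hint : ∀ t : ℝ, IntegrableOn (fun s => usol a t / usol a s * r s) (Iic t) := by
    intro t
    have hmeas : AEStronglyMeasurable (fun s => usol a t / usol a s * r s)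
        (volume.restrict (Iic t)) :=
      ((continuous_const.div hucont fun s => (hupos s).ne').mul hr).aestronglyMeasurable
    have hg : Integrable (fun s => k * M * Real.exp (-β * t) * Real.exp (β * s))
        (volume.restrict (Iic t)) := (hexpint t).const_mul _
    refine Integrable.mono' hg hmeas ?_
    rw [ae_restrict_iff' measurableSet_Iic]
    refine Filter.Eventually.of_forall fun s hs => ?_
    have h1 := hbnd s t hs
    have h2 := hM s
    have hP : 0 < usol a t / usol a s := div_pos (hupos t) (hupos s)
    have : ‖usol a t / usol a s * r s‖ ≤ k * Real.exp (-β * (t - s)) * M := by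
      rw [norm_mul, Real.norm_eq_abs, Real.norm_eq_abs, abs_of_pos hP]
      exact mul_le_mul h1 h2 (abs_nonneg _) (le_trans hP.le h1)
    calc ‖usol a t / usol a s * r s‖ ≤ k * Real.exp (-β * (t - s)) * M := this
      _ = k * M * Real.exp (-β * t) * Real.exp (β * s) := by
          rw [show -β * (t - s) = -β * t + β * s by ring, Real.exp_add]; ring
  -- bound
  have hybnd : ∀ t : ℝ, |ysol a r t| ≤ k * M / β := by
    intro t
    have hg : Integrable (fun s => k * M * Real.exp (-β * t) * Real.exp (β * s))
        (volume.restrict (Iic t)) := (hexpint t).const_mul _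
    have hle : ∀ᵐ s ∂volume.restrict (Iic t),
        ‖usol a t / usol a s * r s‖ ≤ k * M * Real.exp (-β * t) * Real.exp (β * s) := by
      rw [ae_restrict_iff' measurableSet_Iic]
      refine Filter.Eventually.of_forall fun s hs => ?_
      have h1 := hbnd s t hs
      have h2 := hM s
      have hP : 0 < usol a t / usol a s := div_pos (hupos t) (hupos s)
      have : ‖usol a t / usol a s * r s‖ ≤ k * Real.exp (-β * (t - s)) * M := by
        rw [norm_mul, Real.norm_eq_abs, Real.norm_eq_abs, abs_of_pos hP]
        exact mul_le_mul h1 h2 (abs_nonneg _) (le_trans hP.le h1)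
      calc ‖usol a t / usol a s * r s‖ ≤ k * Real.exp (-β * (t - s)) * M := this
        _ = k * M * Real.exp (-β * t) * Real.exp (β * s) := by
            rw [show -β * (t - s) = -β * t + β * s by ring, Real.exp_add]; ring
    have h3 : ‖ysol a r t‖ ≤ ∫ s in Iic t, k * M * Real.exp (-β * t) * Real.exp (β * s) :=
      norm_integral_le_of_norm_le hg hle
    rw [integral_const_mul, hexpval t] at h3
    calc |ysol a r t| ≤ k * M * Real.exp (-β * t) * (Real.exp (β * t) / β) := h3
      _ = k * M / β := by
          rw [show k * M * Real.exp (-β * t) * (Real.exp (β * t) / β)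
              = k * M * (Real.exp (-β * t) * Real.exp (β * t)) / β by ring,
            ← Real.exp_add]
          norm_num
  -- derivative
  set f : ℝ → ℝ := fun s => r s / usol a s with hf_def
  have hfc : Continuous f := hr.div hucont fun s => (hupos s).ne'
  have hfint : ∀ t : ℝ, IntegrableOn f (Iic t) := by
    intro t
    have h1 : IntegrableOn (fun s => usol a t * f s) (Iic t) := by
      refine (hint t).congr_fun (fun s _ => ?_) measurableSet_Iic
      simp only [hf_def]
      field_simp
    have h2 := h1.const_mul (usol a t)⁻¹
    exact IntegrableOn.congr_fun h2 (fun s _ => by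
      rw [inv_mul_cancel_left₀ (hupos t).ne']) measurableSet_Iic
  set g : ℝ → ℝ := fun t => ∫ s in Iic t, f s with hg_def
  have hyg : ∀ t, ysol a r t = usol a t * g t := by
    intro t
    rw [ysol, hg_def, ← integral_const_mul]
    refine setIntegral_congr_fun measurableSet_Iic fun s _ => ?_
    simp only [hf_def]
    field_simp
  have hg' : ∀ t, HasDerivAt g (f t) t := by
    intro t
    have heq : g = fun u => g 0 + ∫ s in (0:ℝ)..u, f s := by
      funext u
      have := intervalIntegral.integral_Iic_sub_Iic (hfint 0) (hfint u)
      rw [hg_def]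
      linarith [this]
    rw [heq]
    exact (intervalIntegral.integral_hasDerivAt_right (hfc.intervalIntegrable 0 t)
      (hfc.stronglyMeasurableAtFilter _ _) hfc.continuousAt).const_add (g 0)
  have hy' : ∀ t, HasDerivAt (ysol a r) (a t * ysol a r t + r t) t := by
    intro t
    have hprod : HasDerivAt (fun u => usol a u * g u)
        (a t * usol a t * g t + usol a t * f t) t := (hu' t).mul (hg' t)
    have heq : (fun u => usol a u * g u) = ysol a r := funext fun u => (hyg u).symm
    rw [heq] at hprod
    have hft : usol a t * f t = r t := by
      simp only [hf_def]
      field_simp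
      exact mul_div_cancel_left₀ (r t) (hupos t).ne'
    rw [hyg t, ← hft] at *
    convert hprod using 1
    ring
  refine ⟨hint, hy', hybnd, ?_⟩
  -- uniqueness
  intro z hz ⟨C, hC⟩ t
  set w : ℝ → ℝ := fun t => z t - ysol a r t with hw_def
  have hw' : ∀ t, HasDerivAt w (a t * w t) t := by
    intro t
    have := (hz t).sub (hy' t)
    refine this.congr_deriv (Eq.symm ?_)
    show a t * (z t - ysol a r t) = a t * z t + r t - (a t * ysol a r t + r t)
    ring
  have hwq : ∀ t, w t = w 0 * usol a t := by
    intro t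
    set q : ℝ → ℝ := fun t => w t / usol a t with hq_def
    have hq' : ∀ x, HasDerivAt q 0 x := by
      intro x
      have := (hw' x).div (hu' x) (hupos x).ne'
      refine this.congr_deriv ?_
      rw [div_eq_zero_iff]
      left; ring
    have hconst : q t = q 0 :=
      is_const_of_deriv_eq_zero (fun x => (hq' x).differentiableAt)
        (fun x => (hq' x).deriv) t 0
    have : w t / usol a t = w 0 / usol a 0 := hconst
    rw [hu0, div_one] at this
    rwa [div_eq_iff (hupos t).ne'] at this
  -- w is bounded
  set D : ℝ := C + k * M / β with hD_def
  have hwb : ∀ t, |w t| ≤ D := by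
    intro t
    calc |w t| ≤ |z t| + |ysol a r t| := abs_sub _ _
      _ ≤ C + k * M / β := add_le_add (hC t) (hybnd t)
  have hw0 : w 0 = 0 := by
    by_contra h0
    have habs : 0 < |w 0| := abs_pos.mpr h0
    set K : ℝ := k * (D + 1) / |w 0| with hK_def
    have hD0 : 0 ≤ D := le_trans (abs_nonneg _) (hwb 0)
    have hK0 : 0 < K := div_pos (mul_pos hk0 (by linarith)) habs
    set s : ℝ := -(Real.log K + 1) / β with hs_def
    have hDw0 : |w 0| ≤ D := hwb 0
    have hK1 : 1 < K := by
      rw [hK_def, lt_div_iff₀ habs]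
      nlinarith
    have hlogK : 0 < Real.log K := Real.log_pos hK1
    have hs0 : s ≤ 0 := by
      rw [hs_def]
      apply div_nonpos_of_nonpos_of_nonneg <;> linarith
    -- lower bound on usol a s
    have hus : Real.exp (-β * s) / k ≤ usol a s := by
      have h1 := hdich s 0 hs0
      rw [← hudiv, hu0] at h1
      have h1' : 1 / usol a s ≤ k * Real.exp (β * s) := by
        rw [show β * s = -β * (0 - s) by ring]; exact h1
      rw [div_le_iff₀ (hupos s)] at h1'
      have hmul : Real.exp (β * s) * Real.exp (-β * s) = 1 := by
        rw [← Real.exp_add, show β * s + -β * s = 0 by ring, Real.exp_zero]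
      have h2 : k * Real.exp (β * s) * usol a s * Real.exp (-β * s) = k * usol a s := by
        rw [show k * Real.exp (β * s) * usol a s * Real.exp (-β * s)
            = k * usol a s * (Real.exp (β * s) * Real.exp (-β * s)) by ring, hmul, mul_one]
      rw [div_le_iff₀ hk0]
      nlinarith [mul_le_mul_of_nonneg_right h1' (Real.exp_pos (-β * s)).le, h2]
    have hexps : K ≤ Real.exp (-β * s) := by
      have : -β * s = Real.log K + 1 := by
        rw [hs_def]; field_simp
      rw [this]
      calc K = Real.exp (Real.log K) := (Real.exp_log hK0).symm
        _ ≤ Real.exp (Real.log K + 1) := Real.exp_le_exp.mpr (by linarith)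
    have hlow : D + 1 ≤ |w s| := by
      have h1 : |w s| = |w 0| * usol a s := by
        rw [hwq s, abs_mul, abs_of_pos (hupos s)]
      have h2 : |w 0| * (K / k) ≤ |w 0| * usol a s := by
        apply mul_le_mul_of_nonneg_left _ (abs_nonneg _)
        calc K / k ≤ Real.exp (-β * s) / k := (div_le_div_iff_of_pos_right hk0).mpr hexps
          _ ≤ usol a s := hus
      have h3 : |w 0| * (K / k) = D + 1 := by
        rw [hK_def]
        field_simp
      rw [h1]
      calc D + 1 = |w 0| * (K / k) := h3.symm
        _ ≤ |w 0| * usol a s := h2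
    linarith [hwb s, hlow]
  have hwt : w t = 0 := by rw [hwq t, hw0, zero_mul]
  have : z t - ysol a r t = 0 := hwt
  linarith
end
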